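/- arXiv:1803.00092 — 13 statements merged into one kernel-verified Lean document; each statement's English description precedes it below -/
import Mathlib

section
/- Let X and Y be real normed spaces such that every bounded sequence in X has a weakly convergent subsequence, let D ⊆ X be nonempty and weakly sequentially closed (if x_n ∈ D converges weakly to x, then x ∈ D), let F : D → Y, 𝒟 : Y × Y → [0,∞], α > 0 and y ∈ Y. Assume that the map x ↦ 𝒟(F(x), y) is weakly sequentially lower semicontinuous on D (i.e. 𝒟(F(x̄),y) ≤ liminf_n 𝒟(F(x_n),y) whenever x_n ∈ D converges weakly to x̄ ∈ D), and that R : X → [0,∞] is weakly sequentially lower semicontinuous and coercive. Then there exists x* ∈ D with T_{α;y}(x*) ≤ T_{α;y}(x) for all x ∈ D, i.e. the Tikhonov functional T_{α;y} attains its infimum over D. -/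
open Filter Topology ENNReal

/-- Weak sequential convergence in a real normed space. -/
def WConv {E : Type*} [NormedAddCommGroup E] [NormedSpace ℝ E] (u : ℕ → E) (x : E) : Prop :=
  ∀ f : E →L[ℝ] ℝ, Filter.Tendsto (fun n => f (u n)) Filter.atTop (nhds (f x))

private lemma mul_liminf_le' (c : ℝ≥0∞) (u : ℕ → ℝ≥0∞) :
    c * Filter.liminf u Filter.atTop ≤ Filter.liminf (fun n => c * u n) Filter.atTop := by
  rw [Filter.liminf_eq_iSup_iInf_of_nat, Filter.liminf_eq_iSup_iInf_of_nat, ENNReal.mul_iSup]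
  exact iSup_mono fun n => le_iInf₂ fun i hi => mul_le_mul_right (iInf₂_le i hi) c

private lemma add_liminf_le' (u v : ℕ → ℝ≥0∞) :
    Filter.liminf u Filter.atTop + Filter.liminf v Filter.atTop ≤
      Filter.liminf (fun n => u n + v n) Filter.atTop := by
  rw [Filter.liminf_eq_iSup_iInf_of_nat, Filter.liminf_eq_iSup_iInf_of_nat,
    Filter.liminf_eq_iSup_iInf_of_nat]
  rw [ENNReal.iSup_add_iSup_of_monotone
    (fun n m hnm => le_iInf₂ fun i hi => iInf₂_le i (hnm.trans hi))
    (fun n m hnm => le_iInf₂ fun i hi => iInf₂_le i (hnm.trans hi))]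
  exact iSup_mono fun n => le_iInf₂ fun i hi => add_le_add (iInf₂_le i hi) (iInf₂_le i hi)

/-- Existence of minimizers of the generalized Tikhonov (NETT) functional. -/
theorem statement0 {X Y : Type*} [NormedAddCommGroup X] [NormedSpace ℝ X]
    [NormedAddCommGroup Y] [NormedSpace ℝ Y]
    -- every bounded sequence in X has a weakly convergent subsequence
    (hrefl : ∀ u : ℕ → X, (∃ M : ℝ, ∀ n, ‖u n‖ ≤ M) →
      ∃ φ : ℕ → ℕ, StrictMono φ ∧ ∃ xb : X, WConv (fun n => u (φ n)) xb)
    (D : Set X) (hD : D.Nonempty)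
    -- D is weakly sequentially closed
    (hDcl : ∀ (u : ℕ → X) (xb : X), (∀ n, u n ∈ D) → WConv u xb → xb ∈ D)
    (F : X → Y) (𝒟 : Y → Y → ℝ≥0∞) (α : ℝ) (hα : 0 < α) (y : Y)
    -- x ↦ 𝒟(F(x), y) is weakly sequentially lower semicontinuous on D
    (hFlsc : ∀ (u : ℕ → X) (xb : X), (∀ n, u n ∈ D) → xb ∈ D → WConv u xb →
      𝒟 (F xb) y ≤ Filter.liminf (fun n => 𝒟 (F (u n)) y) Filter.atTop)
    (R : X → ℝ≥0∞)
    -- R is weakly sequentially lower semicontinuous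
    (hRlsc : ∀ (u : ℕ → X) (xb : X), WConv u xb →
      R xb ≤ Filter.liminf (fun n => R (u n)) Filter.atTop)
    -- R is coercive
    (hRcoer : ∀ u : ℕ → X, Tendsto (fun n => ‖u n‖) atTop atTop →
      Tendsto (fun n => R (u n)) atTop (𝓝 (⊤ : ℝ≥0∞))) :
    ∃ xs ∈ D, ∀ x ∈ D,
      𝒟 (F xs) y + ENNReal.ofReal α * R xs ≤ 𝒟 (F x) y + ENNReal.ofReal α * R x := by
  set T : X → ℝ≥0∞ := fun x => 𝒟 (F x) y + ENNReal.ofReal α * R x with hT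
  set m : ℝ≥0∞ := ⨅ x ∈ D, T x with hm
  have hmle : ∀ x ∈ D, m ≤ T x := fun x hx => iInf₂_le x hx
  have hα0 : ENNReal.ofReal α ≠ 0 := (ENNReal.ofReal_pos.2 hα).ne'
  rcases eq_or_ne m ⊤ with hmt | hmt
  · obtain ⟨x₀, hx₀⟩ := hD
    refine ⟨x₀, hx₀, fun x hx => ?_⟩
    have hx' := hmle x hx
    rw [hmt, top_le_iff] at hx'
    show T x₀ ≤ T x
    rw [hx']
    exact le_top
  -- minimizing sequence
  have hseq : ∀ n : ℕ, ∃ x, x ∈ D ∧ T x < m + 1 / (n + 1) := by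
    intro n
    have hlt : m < m + 1 / (n + 1) :=
      ENNReal.lt_add_right hmt (by simp)
    have h' := hlt
    rw [hm, iInf_lt_iff] at h'
    obtain ⟨x, hx⟩ := h'
    rw [iInf_lt_iff] at hx
    obtain ⟨hxD, hx⟩ := hx
    exact ⟨x, hxD, hx⟩
  choose u huD huT using hseq
  -- T (u n) ≤ m + 1
  have hub : ∀ n, T (u n) ≤ m + 1 := by
    intro n
    refine (huT n).le.trans (add_le_add_right ?_ m)
    exact ENNReal.div_le_of_le_mul (by simpa using le_add_self)
  -- boundedness of the minimizing sequence
  have hbdd : ∃ M : ℝ, ∀ n, ‖u n‖ ≤ M := by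
    by_contra hnb
    push_neg at hnb
    have key : ∀ N : ℕ, ∀ M : ℝ, ∃ n, N ≤ n ∧ M < ‖u n‖ := by
      intro N M
      obtain ⟨C, hC⟩ := (Set.finite_range fun j : Fin N => ‖u j‖).bddAbove
      obtain ⟨n, hn⟩ := hnb (max M C)
      refine ⟨n, ?_, lt_of_le_of_lt (le_max_left _ _) hn⟩
      by_contra hlt
      push_neg at hlt
      exact absurd (le_trans (hC ⟨⟨n, hlt⟩, rfl⟩) (le_max_right M C)) (not_le.2 hn)
    have hφ : ∃ φ : ℕ → ℕ, ∀ k, (φ k < φ (k + 1)) ∧ (k : ℝ) < ‖u (φ k)‖ := by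
      choose g hg1 hg2 using key
      refine ⟨fun k => Nat.rec (g 0 0) (fun k ih => g (ih + 1) ((k : ℝ) + 1)) k, fun k => ?_⟩
      refine ⟨hg1 _ _, ?_⟩
      cases k with
      | zero => simpa using hg2 0 0
      | succ k => push_cast; exact hg2 _ _
    obtain ⟨φ, hφ⟩ := hφ
    have hnorm : Tendsto (fun k => ‖u (φ k)‖) atTop atTop :=
      tendsto_atTop_mono (fun k => (hφ k).2.le) tendsto_natCast_atTop_atTop
    have hRtop : Tendsto (fun k => R (u (φ k))) atTop (𝓝 (⊤ : ℝ≥0∞)) :=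
      hRcoer _ hnorm
    have hmul : Tendsto (fun k => ENNReal.ofReal α * R (u (φ k))) atTop (𝓝 (⊤ : ℝ≥0∞)) := by
      have h := ENNReal.Tendsto.const_mul (a := ENNReal.ofReal α) hRtop (Or.inl ENNReal.top_ne_zero)
      simpa [ENNReal.mul_top hα0] using h
    have hTtop : Tendsto (fun k => T (u (φ k))) atTop (𝓝 (⊤ : ℝ≥0∞)) := by
      refine tendsto_nhds_top_mono hmul ?_
      filter_upwards with k
      exact le_add_self
    have hlt : m + 1 < (⊤ : ℝ≥0∞) := ENNReal.add_lt_top.2 ⟨hmt.lt_top, ENNReal.one_lt_top⟩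
    obtain ⟨k, hk⟩ := (hTtop.eventually (lt_mem_nhds hlt)).exists
    exact absurd (hub (φ k)) (not_le.2 hk)
  obtain ⟨ψ, hψmono, xb, hxbconv⟩ := hrefl u hbdd
  have hxbD : xb ∈ D := hDcl _ xb (fun n => huD (ψ n)) hxbconv
  refine ⟨xb, hxbD, fun x hx => ?_⟩
  refine le_trans ?_ (hmle x hx)
  have h1 : T xb ≤ Filter.liminf (fun n => T (u (ψ n))) Filter.atTop := by
    have hF := hFlsc (fun n => u (ψ n)) xb (fun n => huD (ψ n)) hxbD hxbconv
    have hR := hRlsc (fun n => u (ψ n)) xb hxbconv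
    have hR' : ENNReal.ofReal α * R xb ≤
        Filter.liminf (fun n => ENNReal.ofReal α * R (u (ψ n))) Filter.atTop :=
      le_trans (mul_le_mul_right hR _) (mul_liminf_le' _ _)
    calc T xb ≤ Filter.liminf (fun n => 𝒟 (F (u (ψ n))) y) Filter.atTop +
          Filter.liminf (fun n => ENNReal.ofReal α * R (u (ψ n))) Filter.atTop :=
        add_le_add hF hR'
      _ ≤ Filter.liminf (fun n => 𝒟 (F (u (ψ n))) y +
          ENNReal.ofReal α * R (u (ψ n))) Filter.atTop := add_liminf_le' _ _
      _ = Filter.liminf (fun n => T (u (ψ n))) Filter.atTop := rfl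
  have h2 : Filter.liminf (fun n => T (u (ψ n))) Filter.atTop ≤ m := by
    have hle : ∀ n, T (u (ψ n)) ≤ m + 1 / (n + 1) := by
      intro n
      refine (huT (ψ n)).le.trans (add_le_add_right ?_ m)
      refine ENNReal.div_le_div_left ?_ 1
      exact add_le_add_left (Nat.cast_le.2 hψmono.le_apply) 1
    have htend : Tendsto (fun n : ℕ => m + 1 / ((n : ℝ≥0∞) + 1)) atTop (𝓝 m) := by
      have h0 : Tendsto (fun n : ℕ => 1 / ((n : ℝ≥0∞) + 1)) atTop (𝓝 0) := by
        have : (fun n : ℕ => 1 / ((n : ℝ≥0∞) + 1)) =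
            (fun n : ℕ => ((n : ℝ≥0∞))⁻¹) ∘ (fun n => n + 1) := by
          funext n; simp [one_div]
        rw [this]
        exact ENNReal.tendsto_inv_nat_nhds_zero.comp (tendsto_add_atTop_nat 1)
      simpa using Tendsto.const_add m h0
    calc Filter.liminf (fun n => T (u (ψ n))) Filter.atTop
        ≤ Filter.liminf (fun n : ℕ => m + 1 / ((n : ℝ≥0∞) + 1)) Filter.atTop :=
          Filter.liminf_le_liminf (Filter.Eventually.of_forall hle)
      _ = m := htend.liminf_eq
  exact h1.trans h2
end

section
/- Let X and Y be real normed spaces such that every bounded sequence in X has a weakly convergent subsequence, let D ⊆ X be nonempty and weakly sequentially closed, F : D → Y, 𝒟 : Y × Y → [0,∞], α > 0, and let R : X → [0,∞] be weakly sequentially lower semicontinuous and coercive. Assume: (i) whenever x_n ∈ D converges weakly to x̄ ∈ D and y_n → y in norm, then 𝒟(F(x̄), y) ≤ liminf_n 𝒟(F(x_n), y_n); (ii) there exists z₀ ∈ D with 𝒟(F(z₀), y) + α·R(z₀) < ∞; (iii) 𝒟(F(z), y_k) → 𝒟(F(z), y) for every z ∈ D. Let y_k → y in norm and let x_k ∈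 D minimize T_{α;y_k} over D for each k. Then (x_k) has a subsequence converging weakly to some element of D, and every x̄ ∈ D that is the weak limit of a subsequence of (x_k) is a minimizer of T_{α;y} over D. -/
open Filter Topology ENNReal

/-- Superadditivity of liminf in `ℝ≥0∞`. -/
lemma enn_le_liminf_add {ι : Type*} {f : Filter ι} {u v : ι → ℝ≥0∞} :
    Filter.liminf u f + Filter.liminf v f ≤ Filter.liminf (fun n => u n + v n) f := by
  rcases eq_or_ne (Filter.liminf u f) 0 with h0 | h0
  · rw [h0, zero_add]
    exact liminf_le_liminf (Eventually.of_forall fun n => le_add_self)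
  rcases eq_or_ne (Filter.liminf v f) 0 with h0' | h0'
  · rw [h0', add_zero]
    exact liminf_le_liminf (Eventually.of_forall fun n => le_self_add)
  refine le_of_forall_lt_imp_le_of_dense fun d hd => ?_
  obtain ⟨a, ha, b, hb, hab⟩ := ENNReal.exists_lt_add_of_lt_add hd h0 h0'
  refine le_liminf_of_le (by isBoundedDefault) ?_
  filter_upwards [eventually_lt_of_lt_liminf ha, eventually_lt_of_lt_liminf hb] with n h1 h2
  exact (hab.trans (ENNReal.add_lt_add h1 h2)).le

/-- Stability of generalized Tikhonov (NETT) regularization. -/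
theorem statement1 {X Y : Type*} [NormedAddCommGroup X] [NormedSpace ℝ X]
    [NormedAddCommGroup Y] [NormedSpace ℝ Y]
    -- every bounded sequence in X has a weakly convergent subsequence
    (hrefl : ∀ u : ℕ → X, (∃ M : ℝ, ∀ n, ‖u n‖ ≤ M) →
      ∃ φ : ℕ → ℕ, StrictMono φ ∧ ∃ xb : X, WConv (fun n => u (φ n)) xb)
    (D : Set X) (hD : D.Nonempty)
    -- D is weakly sequentially closed
    (hDcl : ∀ (u : ℕ → X) (xb : X), (∀ n, u n ∈ D) → WConv u xb → xb ∈ D)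
    (F : X → Y) (𝒟 : Y → Y → ℝ≥0∞) (α : ℝ) (hα : 0 < α)
    (R : X → ℝ≥0∞)
    -- R is weakly sequentially lower semicontinuous
    (hRlsc : ∀ (u : ℕ → X) (xb : X), WConv u xb →
      R xb ≤ Filter.liminf (fun n => R (u n)) Filter.atTop)
    -- R is coercive
    (hRcoer : ∀ u : ℕ → X, Tendsto (fun n => ‖u n‖) atTop atTop →
      Tendsto (fun n => R (u n)) atTop (𝓝 (⊤ : ℝ≥0∞)))
    (y : Y)
    -- (i) joint weak sequential lower semicontinuity along norm convergent data
    (hjoint : ∀ (u : ℕ → X) (xb : X) (ys : ℕ → Y), (∀ n, u n ∈ D) → xb ∈ D →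
      WConv u xb → Tendsto ys atTop (𝓝 y) →
      𝒟 (F xb) y ≤ Filter.liminf (fun n => 𝒟 (F (u n)) (ys n)) Filter.atTop)
    -- (ii) finiteness of the Tikhonov functional at some point of D
    (hfin : ∃ z₀ ∈ D, 𝒟 (F z₀) y + ENNReal.ofReal α * R z₀ < ⊤)
    -- data sequence converging in norm
    (yk : ℕ → Y) (hyk : Tendsto yk atTop (𝓝 y))
    -- (iii) continuity of the data term along the data sequence
    (hcont : ∀ z ∈ D, Tendsto (fun k => 𝒟 (F z) (yk k)) atTop (𝓝 (𝒟 (F z) y)))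
    -- minimizers for the perturbed data
    (xk : ℕ → X) (hxkD : ∀ k, xk k ∈ D)
    (hmin : ∀ k, ∀ z ∈ D,
      𝒟 (F (xk k)) (yk k) + ENNReal.ofReal α * R (xk k) ≤
        𝒟 (F z) (yk k) + ENNReal.ofReal α * R z) :
    (∃ φ : ℕ → ℕ, StrictMono φ ∧ ∃ xb ∈ D, WConv (fun n => xk (φ n)) xb) ∧
    (∀ xb ∈ D, (∃ φ : ℕ → ℕ, StrictMono φ ∧ WConv (fun n => xk (φ n)) xb) →
      ∀ z ∈ D, 𝒟 (F xb) y + ENNReal.ofReal α * R xb ≤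
        𝒟 (F z) y + ENNReal.ofReal α * R z) := by
  obtain ⟨z₀, hz₀D, hz₀fin⟩ := hfin
  set L := 𝒟 (F z₀) y with hL
  have hLlt : L < ⊤ := le_self_add.trans_lt hz₀fin
  have hRz₀lt : ENNReal.ofReal α * R z₀ < ⊤ := le_add_self.trans_lt hz₀fin
  set C := (L + 1) + ENNReal.ofReal α * R z₀ with hC
  have hClt : C < ⊤ := by
    have h1 : L + 1 < ⊤ := by
      rw [ENNReal.add_lt_top]; exact ⟨hLlt, one_lt_top⟩
    rw [hC, ENNReal.add_lt_top]; exact ⟨h1, hRz₀lt⟩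
  -- eventual bound on the penalty term
  have hev : ∀ᶠ k in atTop, 𝒟 (F z₀) (yk k) < L + 1 :=
    (hcont z₀ hz₀D).eventually (eventually_lt_nhds (ENNReal.lt_add_right hLlt.ne one_ne_zero))
  have hbd : ∀ᶠ k in atTop, ENNReal.ofReal α * R (xk k) ≤ C := by
    filter_upwards [hev] with k hk
    calc ENNReal.ofReal α * R (xk k)
        ≤ 𝒟 (F (xk k)) (yk k) + ENNReal.ofReal α * R (xk k) := le_add_self
      _ ≤ 𝒟 (F z₀) (yk k) + ENNReal.ofReal α * R z₀ := hmin k z₀ hz₀D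
      _ ≤ (L + 1) + ENNReal.ofReal α * R z₀ := add_le_add_left hk.le _
  -- the sequence of minimizers is bounded
  have hbound : ∃ M : ℝ, ∀ n, ‖xk n‖ ≤ M := by
    by_contra hnb
    push_neg at hnb
    have hfreq : ∀ n : ℕ, ∃ᶠ k in atTop, (n : ℝ) ≤ ‖xk k‖ := by
      intro n
      rw [frequently_atTop]
      intro N
      obtain ⟨k, hk⟩ := hnb (max (n : ℝ) (∑ j ∈ Finset.range N, ‖xk j‖))
      refine ⟨k, ?_, le_of_lt ((le_max_left _ _).trans_lt hk)⟩
      by_contra hkN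
      push_neg at hkN
      have hsum : ‖xk k‖ ≤ ∑ j ∈ Finset.range N, ‖xk j‖ :=
        Finset.single_le_sum (fun j _ => norm_nonneg (xk j)) (Finset.mem_range.mpr hkN)
      exact absurd hk (not_lt.mpr (hsum.trans (le_max_right _ _)))
    obtain ⟨ψ, hψ, hψn⟩ := extraction_forall_of_frequently hfreq
    have hnorm : Tendsto (fun n => ‖xk (ψ n)‖) atTop atTop :=
      tendsto_atTop_mono hψn tendsto_natCast_atTop_atTop
    have hRtop : Tendsto (fun n => R (xk (ψ n))) atTop (𝓝 (⊤ : ℝ≥0∞)) :=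
      hRcoer (fun n => xk (ψ n)) hnorm
    have hαtop : Tendsto (fun n => ENNReal.ofReal α * R (xk (ψ n))) atTop (𝓝 (⊤ : ℝ≥0∞)) := by
      have := ENNReal.Tendsto.const_mul (b := (⊤ : ℝ≥0∞)) (a := ENNReal.ofReal α) hRtop
        (Or.inl (by simp))
      rwa [ENNReal.mul_top (ENNReal.ofReal_pos.mpr hα).ne'] at this
    have hgt : ∀ᶠ n in atTop, C < ENNReal.ofReal α * R (xk (ψ n)) :=
      hαtop.eventually (lt_mem_nhds hClt)
    obtain ⟨N, hN⟩ := eventually_atTop.mp hbd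
    obtain ⟨n, hn, hgtn⟩ := ((eventually_atTop.mp hgt).elim fun N' hN' =>
      ⟨max N N', ⟨le_max_left _ _, hN' _ (le_max_right _ _)⟩⟩ :
        ∃ n, N ≤ n ∧ C < ENNReal.ofReal α * R (xk (ψ n)))
    exact absurd (hN (ψ n) (hn.trans (hψ.le_apply))) (not_le.mpr hgtn)
  obtain ⟨φ, hφ, xb, hw⟩ := hrefl xk hbound
  have hxbD : xb ∈ D := hDcl (fun n => xk (φ n)) xb (fun n => hxkD _) hw
  constructor
  · exact ⟨φ, hφ, xb, hxbD, hw⟩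
  · rintro xb' hxb'D ⟨φ', hφ', hw'⟩ z hzD
    have hφt : Tendsto φ' atTop atTop := hφ'.tendsto_atTop
    have hyφ : Tendsto (fun n => yk (φ' n)) atTop (𝓝 y) := hyk.comp hφt
    have h1 : 𝒟 (F xb') y ≤
        Filter.liminf (fun n => 𝒟 (F (xk (φ' n))) (yk (φ' n))) atTop :=
      hjoint (fun n => xk (φ' n)) xb' (fun n => yk (φ' n)) (fun n => hxkD _) hxb'D hw' hyφ
    have h2 : ENNReal.ofReal α * R xb' ≤
        Filter.liminf (fun n => ENNReal.ofReal α * R (xk (φ' n))) atTop := by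
      have hm := ENNReal.le_liminf_mul (f := atTop) (u := fun _ : ℕ => ENNReal.ofReal α)
        (v := fun n => R (xk (φ' n)))
      rw [liminf_const] at hm
      calc ENNReal.ofReal α * R xb'
          ≤ ENNReal.ofReal α * Filter.liminf (fun n => R (xk (φ' n))) atTop :=
            mul_le_mul_right (hRlsc (fun n => xk (φ' n)) xb' hw') _
        _ ≤ _ := hm
    have h4 : Filter.liminf
          (fun n => 𝒟 (F (xk (φ' n))) (yk (φ' n)) + ENNReal.ofReal α * R (xk (φ' n))) atTop ≤
        Filter.liminf (fun n => 𝒟 (F z) (yk (φ' n)) + ENNReal.ofReal α * R z) atTop :=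
      liminf_le_liminf (Eventually.of_forall fun n => hmin (φ' n) z hzD)
    have h5 : Filter.liminf (fun n => 𝒟 (F z) (yk (φ' n)) + ENNReal.ofReal α * R z) atTop =
        𝒟 (F z) y + ENNReal.ofReal α * R z :=
      (Tendsto.add ((hcont z hzD).comp hφt) tendsto_const_nhds).liminf_eq
    calc 𝒟 (F xb') y + ENNReal.ofReal α * R xb'
        ≤ Filter.liminf (fun n => 𝒟 (F (xk (φ' n))) (yk (φ' n))) atTop +
          Filter.liminf (fun n => ENNReal.ofReal α * R (xk (φ' n))) atTop := add_le_add h1 h2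
      _ ≤ Filter.liminf
            (fun n => 𝒟 (F (xk (φ' n))) (yk (φ' n)) + ENNReal.ofReal α * R (xk (φ' n))) atTop :=
          enn_le_liminf_add
      _ ≤ Filter.liminf (fun n => 𝒟 (F z) (yk (φ' n)) + ENNReal.ofReal α * R z) atTop := h4
      _ = 𝒟 (F z) y + ENNReal.ofReal α * R z := h5
end

section
/- Let X and Y be real normed spaces such that every bounded sequence in X has a weakly convergent subsequence, let D ⊆ X be nonempty and weakly sequentially closed, F : D → Y, and let R : X → [0,∞] be weakly sequentially lower semicontinuous and coercive. Assume 𝒟 : Y × Y → [0,∞] satisfies 𝒟(y₀,y₁) = 0 ⟺ y₀ = y₁, and: whenever x_n ∈ D converges weakly to x̄ ∈ D and (y_n) satisfies 𝒟(y_n, y) → 0 and 𝒟(y, y_n) → 0, then 𝒟(F(x̄), y) ≤ liminf_n 𝒟(F(x_n), y_n). Let x ∈ D with y := F(x) and R(x) < ∞, let δ_k > 0 with δ_k → 0, let y_k ∈ Y satisfy 𝒟(y_k, y) ≤ δ_k and 𝒟(y, y_k) ≤ δ_k, let α : (0,∞) → (0,∞) satisfy α(δ) → 0 and δ/α(δ)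 → 0 as δ → 0, and let x_k ∈ D minimize T_{α(δ_k);y_k} over D. Then: (a) (x_k) has a subsequence converging weakly to some element of D; (b) every weak accumulation point x̄ ∈ D of (x_k) is an R-minimizing solution of F(x) = y; (c) along any subsequence (x_{k(n)}) converging weakly to such an x̄, one has R(x_{k(n)}) → R(x̄). -/
open Filter Topology ENNReal

/-- Weak convergence of generalized Tikhonov (NETT) regularization as the noise level
vanishes. -/
theorem statement2 {X Y : Type*} [NormedAddCommGroup X] [NormedSpace ℝ X]
    [NormedAddCommGroup Y] [NormedSpace ℝ Y]
    -- every bounded sequence in X has a weakly convergent subsequence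
    (hrefl : ∀ u : ℕ → X, (∃ M : ℝ, ∀ n, ‖u n‖ ≤ M) →
      ∃ φ : ℕ → ℕ, StrictMono φ ∧ ∃ xb : X, WConv (fun n => u (φ n)) xb)
    (D : Set X) (hD : D.Nonempty)
    -- D is weakly sequentially closed
    (hDcl : ∀ (u : ℕ → X) (xb : X), (∀ n, u n ∈ D) → WConv u xb → xb ∈ D)
    (F : X → Y)
    (R : X → ℝ≥0∞)
    -- R is weakly sequentially lower semicontinuous
    (hRlsc : ∀ (u : ℕ → X) (xb : X), WConv u xb →
      R xb ≤ Filter.liminf (fun n => R (u n)) Filter.atTop)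
    -- R is coercive
    (hRcoer : ∀ u : ℕ → X, Tendsto (fun n => ‖u n‖) atTop atTop →
      Tendsto (fun n => R (u n)) atTop (𝓝 (⊤ : ℝ≥0∞)))
    (𝒟 : Y → Y → ℝ≥0∞)
    (h𝒟eq : ∀ y₀ y₁ : Y, 𝒟 y₀ y₁ = 0 ↔ y₀ = y₁)
    (x : X) (hxD : x ∈ D) (y : Y) (hy : y = F x) (hRx : R x < ⊤)
    -- joint sequential lower semicontinuity of the data term
    (hjoint : ∀ (u : ℕ → X) (xb : X) (ys : ℕ → Y), (∀ n, u n ∈ D) → xb ∈ D →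
      WConv u xb → Tendsto (fun n => 𝒟 (ys n) y) atTop (𝓝 0) →
      Tendsto (fun n => 𝒟 y (ys n)) atTop (𝓝 0) →
      𝒟 (F xb) y ≤ Filter.liminf (fun n => 𝒟 (F (u n)) (ys n)) Filter.atTop)
    -- noise levels
    (δ : ℕ → ℝ) (hδpos : ∀ k, 0 < δ k) (hδ0 : Tendsto δ atTop (𝓝 0))
    -- noisy data
    (yk : ℕ → Y) (hyk1 : ∀ k, 𝒟 (yk k) y ≤ ENNReal.ofReal (δ k))
    (hyk2 : ∀ k, 𝒟 y (yk k) ≤ ENNReal.ofReal (δ k))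
    -- parameter choice rule
    (α : ℝ → ℝ) (hαpos : ∀ d : ℝ, 0 < d → 0 < α d)
    (hα0 : Tendsto α (𝓝[>] (0:ℝ)) (𝓝 0))
    (hδα : Tendsto (fun d => d / α d) (𝓝[>] (0:ℝ)) (𝓝 0))
    -- minimizers of the Tikhonov functional for the noisy data
    (xk : ℕ → X) (hxkD : ∀ k, xk k ∈ D)
    (hmin : ∀ k, ∀ z ∈ D,
      𝒟 (F (xk k)) (yk k) + ENNReal.ofReal (α (δ k)) * R (xk k) ≤
        𝒟 (F z) (yk k) + ENNReal.ofReal (α (δ k)) * R z) :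
    -- (a) existence of a weakly convergent subsequence with limit in D
    (∃ φ : ℕ → ℕ, StrictMono φ ∧ ∃ xb ∈ D, WConv (fun n => xk (φ n)) xb) ∧
    -- (b) every weak accumulation point in D is an R-minimizing solution
    (∀ xb ∈ D, (∃ φ : ℕ → ℕ, StrictMono φ ∧ WConv (fun n => xk (φ n)) xb) →
      F xb = y ∧ ∀ z ∈ D, F z = y → R xb ≤ R z) ∧
    -- (c) convergence of the regularizer values along weakly convergent subsequences
    (∀ xb ∈ D, ∀ φ : ℕ → ℕ, StrictMono φ → WConv (fun n => xk (φ n)) xb →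
      Tendsto (fun n => R (xk (φ n))) atTop (𝓝 (R xb))) := by
  classical
  -- abbreviations
  set aK : ℕ → ℝ≥0∞ := fun k => ENNReal.ofReal (α (δ k)) with haKdef
  set qE : ℕ → ℝ≥0∞ := fun k => ENNReal.ofReal (δ k / α (δ k)) with hqEdef
  have haK0 : ∀ k, aK k ≠ 0 := fun k =>
    (ENNReal.ofReal_pos.mpr (hαpos _ (hδpos k))).ne'
  have haKT : ∀ k, aK k ≠ ⊤ := fun k => ENNReal.ofReal_ne_top
  have hδ0' : Tendsto δ atTop (𝓝[>] (0:ℝ)) := by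
    rw [tendsto_nhdsWithin_iff]
    exact ⟨hδ0, Filter.Eventually.of_forall fun k => hδpos k⟩
  have hqE0 : Tendsto qE atTop (𝓝 0) := by
    have := ENNReal.tendsto_ofReal (hδα.comp hδ0')
    simpa using this
  have haKlim : Tendsto aK atTop (𝓝 0) := by
    have := ENNReal.tendsto_ofReal (hα0.comp hδ0')
    simpa using this
  -- key minimality consequence against any exact solution z
  have hbound : ∀ z ∈ D, F z = y → ∀ k, R (xk k) ≤ qE k + R z := by
    intro z hz hFz k
    have h1 : 𝒟 (F (xk k)) (yk k) + aK k * R (xk k) ≤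
        ENNReal.ofReal (δ k) + aK k * R z := by
      have := hmin k z hz
      rw [hFz] at this
      exact this.trans (add_le_add_left (hyk2 k) _)
    have h2 : aK k * R (xk k) ≤ ENNReal.ofReal (δ k) + aK k * R z :=
      le_trans (le_add_self) h1
    have h3 : R (xk k) ≤ (ENNReal.ofReal (δ k) + aK k * R z) / aK k := by
      rw [ENNReal.le_div_iff_mul_le (Or.inl (haK0 k)) (Or.inl (haKT k))]
      rw [mul_comm]; exact h2
    have h4 : (ENNReal.ofReal (δ k) + aK k * R z) / aK k = qE k + R z := by
      rw [ENNReal.add_div]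
      congr 1
      · show ENNReal.ofReal (δ k) / ENNReal.ofReal (α (δ k)) = _
        rw [← ENNReal.ofReal_div_of_pos (hαpos _ (hδpos k))]
      · rw [mul_comm, mul_div_assoc, ENNReal.div_self (haK0 k) (haKT k), mul_one]
    rw [h4] at h3; exact h3
  have hxsol : F x = y := hy.symm
  have hboundx : ∀ k, R (xk k) ≤ qE k + R x := hbound x hxD hxsol
  -- data term tends to zero
  have hup : Tendsto (fun k => ENNReal.ofReal (δ k) + aK k * R x) atTop (𝓝 0) := by
    have h1 : Tendsto (fun k => ENNReal.ofReal (δ k)) atTop (𝓝 0) := by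
      have := ENNReal.tendsto_ofReal hδ0; simpa using this
    have h2 : Tendsto (fun k => aK k * R x) atTop (𝓝 0) := by
      have := ENNReal.Tendsto.mul_const haKlim (Or.inr hRx.ne)
      simpa using this
    have := h1.add h2; simpa using this
  have hdata : Tendsto (fun k => 𝒟 (F (xk k)) (yk k)) atTop (𝓝 0) := by
    refine tendsto_of_tendsto_of_tendsto_of_le_of_le tendsto_const_nhds hup
      (fun k => zero_le) (fun k => ?_)
    have := hmin k x hxD
    rw [← hy] at this
    exact le_trans (le_add_right le_rfl)
      (this.trans (add_le_add_left (hyk2 k) _))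
  -- noisy data converge in 𝒟 distance
  have hofδ : Tendsto (fun k => ENNReal.ofReal (δ k)) atTop (𝓝 0) := by
    have := ENNReal.tendsto_ofReal hδ0; simpa using this
  have hyk1' : Tendsto (fun k => 𝒟 (yk k) y) atTop (𝓝 0) :=
    tendsto_of_tendsto_of_tendsto_of_le_of_le tendsto_const_nhds hofδ
      (fun k => zero_le) hyk1
  have hyk2' : Tendsto (fun k => 𝒟 y (yk k)) atTop (𝓝 0) :=
    tendsto_of_tendsto_of_tendsto_of_le_of_le tendsto_const_nhds hofδ
      (fun k => zero_le) hyk2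
  -- (b)
  have hb : ∀ xb ∈ D, (∃ φ : ℕ → ℕ, StrictMono φ ∧ WConv (fun n => xk (φ n)) xb) →
      F xb = y ∧ ∀ z ∈ D, F z = y → R xb ≤ R z := by
    intro xb hxb ⟨φ, hφ, hw⟩
    have hφT : Tendsto φ atTop atTop := hφ.tendsto_atTop
    have hFxb : F xb = y := by
      have hj := hjoint (fun n => xk (φ n)) xb (fun n => yk (φ n))
        (fun n => hxkD (φ n)) hxb hw (hyk1'.comp hφT) (hyk2'.comp hφT)
      have hlim : Filter.liminf (fun n => 𝒟 (F (xk (φ n))) (yk (φ n))) atTop = 0 :=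
        (hdata.comp hφT).liminf_eq
      rw [hlim] at hj
      exact (h𝒟eq _ _).mp (le_antisymm hj zero_le)
    refine ⟨hFxb, fun z hz hFz => ?_⟩
    have h1 : R xb ≤ Filter.liminf (fun n => R (xk (φ n))) atTop := hRlsc _ _ hw
    have h2 : Filter.liminf (fun n => R (xk (φ n))) atTop ≤ R z := by
      have hlt : Tendsto (fun n => qE (φ n) + R z) atTop (𝓝 (R z)) := by
        have := (hqE0.comp hφT).add (tendsto_const_nhds (x := R z))
        simpa using this
      calc Filter.liminf (fun n => R (xk (φ n))) atTop
          ≤ Filter.liminf (fun n => qE (φ n) + R z) atTop :=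
            Filter.liminf_le_liminf
              (Filter.Eventually.of_forall fun n => hbound z hz hFz (φ n))
        _ = R z := hlt.liminf_eq
    exact h1.trans h2
  -- (a) : boundedness
  have hbdd : ∃ M : ℝ, ∀ n, ‖xk n‖ ≤ M := by
    by_contra hcon
    push_neg at hcon
    have hfreq : ∀ n : ℕ, ∃ᶠ k in atTop, (n : ℝ) < ‖xk k‖ := by
      intro n
      rw [Filter.frequently_atTop]
      intro N
      set B : NNReal := (Finset.range N).sup fun i => ‖xk i‖₊ with hB
      obtain ⟨k, hk⟩ := hcon (max (n : ℝ) (B : ℝ))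
      refine ⟨k, ?_, lt_of_le_of_lt (le_max_left _ _) hk⟩
      by_contra hkN
      push_neg at hkN
      have : ‖xk k‖₊ ≤ B := Finset.le_sup (f := fun i => ‖xk i‖₊) (Finset.mem_range.mpr hkN)
      have : ‖xk k‖ ≤ (B : ℝ) := this
      exact absurd hk (not_lt.mpr (this.trans (le_max_right _ _)))
    obtain ⟨φ, hφ, hφP⟩ := Filter.extraction_forall_of_frequently hfreq
    have hnorm : Tendsto (fun n => ‖xk (φ n)‖) atTop atTop :=
      tendsto_atTop_mono (fun n => (hφP n).le) tendsto_natCast_atTop_atTop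
    have hRtop : Tendsto (fun n => R (xk (φ n))) atTop (𝓝 ⊤) :=
      hRcoer _ hnorm
    -- but R (xk (φ n)) ≤ qE (φ n) + R x which is eventually ≤ R x + 1 < ⊤
    have hev : ∀ᶠ n in atTop, R x + 1 < R (xk (φ n)) :=
      hRtop.eventually_const_lt (lt_of_le_of_ne le_top
        (by simp [ENNReal.add_eq_top, hRx.ne]))
    have hev2 : ∀ᶠ n in atTop, qE (φ n) ≤ 1 := by
      have := (hqE0.comp hφ.tendsto_atTop).eventually_le_const
        (show (0:ℝ≥0∞) < 1 by norm_num)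
      exact this
    obtain ⟨n, h1, h2⟩ := (hev.and hev2).exists
    have : R (xk (φ n)) ≤ 1 + R x := by
      refine (hboundx (φ n)).trans (add_le_add_left h2 _)
    rw [add_comm] at this
    exact absurd h1 (not_lt.mpr this)
  obtain ⟨φ, hφ, xb, hw⟩ := hrefl xk hbdd
  have hxbD : xb ∈ D := hDcl _ _ (fun n => hxkD (φ n)) hw
  refine ⟨⟨φ, hφ, xb, hxbD, hw⟩, hb, ?_⟩
  -- (c)
  intro xb hxb φ' hφ' hw'
  have hFxb : F xb = y := (hb xb hxb ⟨φ', hφ', hw'⟩).1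
  have h1 : R xb ≤ Filter.liminf (fun n => R (xk (φ' n))) atTop := hRlsc _ _ hw'
  have h2 : Filter.limsup (fun n => R (xk (φ' n))) atTop ≤ R xb := by
    have hlt : Tendsto (fun n => qE (φ' n) + R xb) atTop (𝓝 (R xb)) := by
      have := (hqE0.comp hφ'.tendsto_atTop).add (tendsto_const_nhds (x := R xb))
      simpa using this
    calc Filter.limsup (fun n => R (xk (φ' n))) atTop
        ≤ Filter.limsup (fun n => qE (φ' n) + R xb) atTop :=
          Filter.limsup_le_limsup
            (Filter.Eventually.of_forall fun n => hbound xb hxb hFxb (φ' n))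
      _ = R xb := hlt.limsup_eq
  exact tendsto_of_le_liminf_of_limsup_le h1 h2
end

section
/- Let L ≥ 1 and let X₀, …, X_L and Z₁, …, Z_L be real normed spaces. For each ℓ ∈ {1,…,L}, let A_ℓ : X_{ℓ−1} → Z_ℓ be a bounded linear operator, b_ℓ ∈ Z_ℓ, and suppose there is c_ℓ ∈ [0,∞) with ‖x‖ ≤ c_ℓ·‖A_ℓ x‖ for all x ∈ X_{ℓ−1}. Let σ_ℓ : Z_ℓ → X_ℓ be coercive, i.e. ‖σ_ℓ(z_n)‖ → ∞ whenever ‖z_n‖ → ∞, and let ψ : X_L → [0,∞] be coercive, i.e. ψ(u_n) → ∞ whenever ‖u_n‖ → ∞. Define the layered regularizer R : X₀ → [0,∞] by R(x) := ψ(σ_L(A_L(⋯σ₁(A₁x + b₁)⋯) + b_L)). Then R is coercive: R(x_n) → ∞ for every sequence (x_n) in X₀ with ‖x_n‖ → ∞. -/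
open Filter Topology ENNReal

/-- The neural network `x ↦ σ_L(A_L(⋯σ₁(A₁ x + b₁)⋯) + b_L)` with `n` layers,
where layer `i` (for `0 ≤ i < n`) consists of the affine map `z ↦ A i z + b i`
followed by the nonlinearity `σ i`. -/
def net {X Z : ℕ → Type*}
    [∀ i, NormedAddCommGroup (X i)] [∀ i, NormedSpace ℝ (X i)]
    [∀ i, NormedAddCommGroup (Z i)] [∀ i, NormedSpace ℝ (Z i)]
    (A : ∀ i, X i →L[ℝ] Z i) (b : ∀ i, Z i) (σ : ∀ i, Z i → X (i + 1)) :
    (n : ℕ) → X 0 → X n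
  | 0 => fun x => x
  | n + 1 => fun x => σ n (A n (net A b σ n x) + b n)

lemma net_coercive {X Z : ℕ → Type*}
    [∀ i, NormedAddCommGroup (X i)] [∀ i, NormedSpace ℝ (X i)]
    [∀ i, NormedAddCommGroup (Z i)] [∀ i, NormedSpace ℝ (Z i)]
    (A : ∀ i, X i →L[ℝ] Z i) (b : ∀ i, Z i) (σ : ∀ i, Z i → X (i + 1))
    (n : ℕ)
    (hA : ∀ i < n, ∃ c : ℝ, 0 ≤ c ∧ ∀ x : X i, ‖x‖ ≤ c * ‖A i x‖)
    (hσ : ∀ i < n, ∀ z : ℕ → Z i, Filter.Tendsto (fun k => ‖z k‖) Filter.atTop Filter.atTop →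
      Filter.Tendsto (fun k => ‖σ i (z k)‖) Filter.atTop Filter.atTop) :
    ∀ x : ℕ → X 0, Filter.Tendsto (fun k => ‖x k‖) Filter.atTop Filter.atTop →
      Filter.Tendsto (fun k => ‖net A b σ n (x k)‖) Filter.atTop Filter.atTop := by
  induction n with
  | zero => intro x hx; exact hx
  | succ n ih =>
    intro x hx
    have hy : Filter.Tendsto (fun k => ‖net A b σ n (x k)‖) Filter.atTop Filter.atTop :=
      ih (fun i hi => hA i (Nat.lt_succ_of_lt hi))
        (fun i hi => hσ i (Nat.lt_succ_of_lt hi)) x hx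
    obtain ⟨c, hc0, hc⟩ := hA n (Nat.lt_succ_self n)
    have hc0' : 0 < c := by
      rcases hc0.lt_or_eq with h | h
      · exact h
      · exfalso
        obtain ⟨k, hk⟩ := (Filter.Tendsto.eventually_ge_atTop hy 1).exists
        have h2 := hc (net A b σ n (x k))
        rw [← h, zero_mul] at h2
        have := norm_nonneg (net A b σ n (x k))
        linarith
    have hAy : Filter.Tendsto (fun k => ‖A n (net A b σ n (x k))‖) Filter.atTop Filter.atTop := by
      have hdiv : Filter.Tendsto (fun k => ‖net A b σ n (x k)‖ / c) Filter.atTop Filter.atTop :=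
        hy.atTop_div_const hc0'
      apply Filter.tendsto_atTop_mono (fun k => ?_) hdiv
      rw [div_le_iff₀ hc0', mul_comm]
      exact hc (net A b σ n (x k))
    have hz : Filter.Tendsto (fun k => ‖A n (net A b σ n (x k)) + b n‖) Filter.atTop Filter.atTop := by
      apply Filter.tendsto_atTop_mono (fun k => ?_) (hAy.atTop_add (tendsto_const_nhds (x := -‖b n‖)))
      have := norm_sub_le (A n (net A b σ n (x k)) + b n) (b n)
      simp only [add_sub_cancel_right] at this
      linarith
    exact hσ n (Nat.lt_succ_self n) _ hz

/-- Coercivity of the layered (NETT) regularizer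
`R(x) = ψ(σ_L(A_L(⋯σ₁(A₁ x + b₁)⋯) + b_L))`. -/
theorem statement4 {L : ℕ} (hL : 1 ≤ L)
    {X Z : ℕ → Type*}
    [∀ i, NormedAddCommGroup (X i)] [∀ i, NormedSpace ℝ (X i)]
    [∀ i, NormedAddCommGroup (Z i)] [∀ i, NormedSpace ℝ (Z i)]
    (A : ∀ i, X i →L[ℝ] Z i) (b : ∀ i, Z i) (σ : ∀ i, Z i → X (i + 1))
    -- the linear parts are bounded below: ‖x‖ ≤ c_ℓ ‖A_ℓ x‖
    (hA : ∀ i < L, ∃ c : ℝ, 0 ≤ c ∧ ∀ x : X i, ‖x‖ ≤ c * ‖A i x‖)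
    -- the nonlinearities are coercive
    (hσ : ∀ i < L, ∀ z : ℕ → Z i, Tendsto (fun n => ‖z n‖) atTop atTop →
      Tendsto (fun n => ‖σ i (z n)‖) atTop atTop)
    -- the outer functional is coercive
    (ψ : X L → ℝ≥0∞)
    (hψ : ∀ u : ℕ → X L, Tendsto (fun n => ‖u n‖) atTop atTop →
      Tendsto (fun n => ψ (u n)) atTop (𝓝 (⊤ : ℝ≥0∞))) :
    -- the layered regularizer R = ψ ∘ net is coercive
    ∀ x : ℕ → X 0, Tendsto (fun n => ‖x n‖) atTop atTop →
      Tendsto (fun n => ψ (net A b σ L (x n))) atTop (𝓝 (⊤ : ℝ≥0∞)) := by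
  intro x hx
  exact hψ _ (net_coercive A b σ L hA hσ x hx)
end

section
/- Let L ≥ 1 and let X₀, …, X_L and Z₁, …, Z_L be real normed spaces. For each ℓ ∈ {1,…,L}, let A_ℓ : X_{ℓ−1} → Z_ℓ be a bounded linear operator, b_ℓ ∈ Z_ℓ, and let σ_ℓ : Z_ℓ → X_ℓ be weakly sequentially continuous (if z_n converges weakly to z, then σ_ℓ(z_n) converges weakly to σ_ℓ(z)). Let ψ : X_L → [0,∞] be weakly sequentially lower semicontinuous. Then the layered regularizer R : X₀ → [0,∞], R(x) := ψ(σ_L(A_L(⋯σ₁(A₁x + b₁)⋯) + b_L)), is weakly sequentially lower semicontinuous: R(x) ≤ liminf_n R(x_n) whenever (x_n) converges weakly to x in X₀. -/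
open Filter Topology ENNReal

/-- Weak sequential lower semicontinuity of the layered (NETT) regularizer
`R(x) = ψ(σ_L(A_L(⋯σ₁(A₁ x + b₁)⋯) + b_L))`. -/
theorem statement5 {L : ℕ} (hL : 1 ≤ L)
    {X Z : ℕ → Type*}
    [∀ i, NormedAddCommGroup (X i)] [∀ i, NormedSpace ℝ (X i)]
    [∀ i, NormedAddCommGroup (Z i)] [∀ i, NormedSpace ℝ (Z i)]
    (A : ∀ i, X i →L[ℝ] Z i) (b : ∀ i, Z i) (σ : ∀ i, Z i → X (i + 1))
    -- the nonlinearities are weakly sequentially continuous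
    (hσ : ∀ i < L, ∀ (z : ℕ → Z i) (zl : Z i), WConv z zl →
      WConv (fun n => σ i (z n)) (σ i zl))
    -- the outer functional is weakly sequentially lower semicontinuous
    (ψ : X L → ℝ≥0∞)
    (hψ : ∀ (u : ℕ → X L) (ul : X L), WConv u ul →
      ψ ul ≤ Filter.liminf (fun n => ψ (u n)) Filter.atTop) :
    -- the layered regularizer R = ψ ∘ net is weakly sequentially lsc
    ∀ (x : ℕ → X 0) (xb : X 0), WConv x xb →
      ψ (net A b σ L xb) ≤
        Filter.liminf (fun n => ψ (net A b σ L (x n))) Filter.atTop := by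
  intro x xb hx
  have key : ∀ m ≤ L, WConv (fun n => net A b σ m (x n)) (net A b σ m xb) := by
    intro m
    induction m with
    | zero => exact fun _ => hx
    | succ k ih =>
      intro hk
      have hk' : k < L := hk
      have hwk := ih (Nat.le_of_lt hk')
      have hz : WConv (fun n => A k (net A b σ k (x n)) + b k)
          (A k (net A b σ k xb) + b k) := by
        intro f
        simp only [map_add]
        have := hwk (f.comp (A k))
        simpa using this.add_const (f (b k))
      exact hσ k hk' _ _ hz
  exact hψ _ _ (key L le_rfl)
end

section
/- Let X be a real normed space and let R : X → ℝ be Gâteaux differentiable at x ∈ X. Assume the absolute Bregman distance B_R(·, x) is uniformly continuous on bounded subsets of X, and that R is totally nonlinear at x, i.e. ν_R(x,t) > 0 for every t > 0. Then every bounded sequence (x_n) in X with B_R(x_n, x) → 0 satisfies ‖x_n − x‖ → 0. -/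
open Filter Topology ENNReal

/-- If `R` is totally nonlinear at `x` and the absolute Bregman distance `B_R(·, x)` is
uniformly continuous on bounded sets, then bounded sequences with vanishing Bregman
distance to `x` converge to `x` in norm. -/
theorem statement7 {X : Type*} [NormedAddCommGroup X] [NormedSpace ℝ X]
    (R : X → ℝ) (x : X) (R' : X →L[ℝ] ℝ)
    -- R is Gâteaux differentiable at x with derivative R'
    (hgat : ∀ v : X, Tendsto (fun t : ℝ => (R (x + t • v) - R x) / t)
      (𝓝[≠] (0:ℝ)) (𝓝 (R' v)))
    -- B_R(·, x) is uniformly continuous on bounded subsets of X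
    (hunif : ∀ M : ℝ, 0 < M → ∀ ε : ℝ, 0 < ε → ∃ η : ℝ, 0 < η ∧
      ∀ u v : X, ‖u‖ ≤ M → ‖v‖ ≤ M → ‖u - v‖ < η →
        |(|R u - R x - R' (u - x)|) - (|R v - R x - R' (v - x)|)| < ε)
    -- total nonlinearity: ν_R(x, t) > 0 for all t > 0
    (htn : ∀ t : ℝ, 0 < t →
      0 < ⨅ (x' : X) (_ : ‖x' - x‖ = t),
            ENNReal.ofReal |R x' - R x - R' (x' - x)|) :
    ∀ u : ℕ → X, (∃ M : ℝ, ∀ n, ‖u n‖ ≤ M) →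
      Tendsto (fun n => |R (u n) - R x - R' (u n - x)|) atTop (𝓝 (0:ℝ)) →
      Tendsto (fun n => ‖u n - x‖) atTop (𝓝 (0:ℝ)) := by
  intro u hu hB
  obtain ⟨M, hM⟩ := hu
  by_contra hnot
  rw [Metric.tendsto_atTop] at hnot
  push_neg at hnot
  obtain ⟨ε, hε, hfreq⟩ := hnot
  have hfreq' : ∀ N, ∃ n ≥ N, ε ≤ ‖u n - x‖ := by
    intro N
    obtain ⟨n, hn, h⟩ := hfreq N
    refine ⟨n, hn, ?_⟩
    rw [Real.dist_eq, sub_zero, abs_of_nonneg (norm_nonneg _)] at h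
    linarith
  obtain ⟨φ, hφ, hφε⟩ := extraction_of_frequently_atTop (frequently_atTop.2 hfreq')
  have hMnn : 0 ≤ M := le_trans (norm_nonneg _) (hM 0)
  set C := M + ‖x‖ with hC
  have hρmem : ∀ k, ‖u (φ k) - x‖ ∈ Set.Icc ε C := fun k =>
    ⟨hφε k, (norm_sub_le _ _).trans (add_le_add_left (hM _) _)⟩
  obtain ⟨ρ, hρI, ψ, hψ, hψtend⟩ := (isCompact_Icc).tendsto_subseq hρmem
  have hρpos : 0 < ρ := lt_of_lt_of_le hε hρI.1
  obtain ⟨c', hc'0, hc'ν⟩ := exists_between (htn ρ hρpos)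
  have hc'top : c' ≠ ⊤ := ne_top_of_lt hc'ν
  set c := c'.toReal with hcdef
  have hcpos : 0 < c := ENNReal.toReal_pos hc'0.ne' hc'top
  set K := 2 * M + 3 * ‖x‖ + 1 with hK
  have hKpos : 0 < K := by positivity
  obtain ⟨η, hη, hcont⟩ := hunif K hKpos (c / 2) (half_pos hcpos)
  -- eventually the subsequence norms are η-close to ρ
  have h1 : ∃ N1, ∀ k ≥ N1, |‖u (φ (ψ k)) - x‖ - ρ| < η := by
    have := Metric.tendsto_atTop.1 hψtend η hη
    obtain ⟨N1, hN1⟩ := this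
    exact ⟨N1, fun k hk => by simpa [Real.dist_eq] using hN1 k hk⟩
  obtain ⟨N1, hN1⟩ := h1
  -- eventually the Bregman distances are < c/2
  have hcomp : Tendsto (fun k => |R (u (φ (ψ k))) - R x - R' (u (φ (ψ k)) - x)|)
      atTop (𝓝 (0:ℝ)) := hB.comp ((hφ.comp hψ).tendsto_atTop)
  obtain ⟨N2, hN2⟩ := Metric.tendsto_atTop.1 hcomp (c / 2) (half_pos hcpos)
  set k := max N1 N2 with hk
  set n := φ (ψ k) with hn
  have hρn : ε ≤ ‖u n - x‖ := hφε (ψ k)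
  have hρnpos : 0 < ‖u n - x‖ := lt_of_lt_of_le hε hρn
  set ρn := ‖u n - x‖ with hρndef
  set w := x + (ρ / ρn) • (u n - x) with hw
  have hwx : w - x = (ρ / ρn) • (u n - x) := by rw [hw]; abel
  have hwnorm : ‖w - x‖ = ρ := by
    rw [hwx, norm_smul, Real.norm_eq_abs, abs_of_pos (div_pos hρpos hρnpos)]
    field_simp
    exact hρndef.symm
  have hclose : |ρn - ρ| < η := hN1 k (le_max_left _ _)
  have hBn : |R (u n) - R x - R' (u n - x)| < c / 2 := by
    have := hN2 k (le_max_right _ _)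
    rw [Real.dist_eq, sub_zero, abs_abs] at this
    exact this
  -- norm bounds
  have hwK : ‖w‖ ≤ K := by
    have : ‖w‖ ≤ ‖x‖ + ρ := by
      calc ‖w‖ = ‖x + (w - x)‖ := by rw [add_sub_cancel]
        _ ≤ ‖x‖ + ‖w - x‖ := norm_add_le _ _
        _ = ‖x‖ + ρ := by rw [hwnorm]
    have hρC : ρ ≤ C := hρI.2
    rw [hK, hC] at *
    linarith
  have hunK : ‖u n‖ ≤ K := by
    have := hM n
    rw [hK]
    have h0 : (0:ℝ) ≤ ‖x‖ := norm_nonneg _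
    linarith
  have hwu : ‖w - u n‖ < η := by
    have heq : w - u n = (ρ / ρn - 1) • (u n - x) := by
      rw [sub_smul, one_smul, ← hwx]
      abel
    have : ‖w - u n‖ = |ρ - ρn| := by
      rw [heq, norm_smul, Real.norm_eq_abs, ← hρndef]
      rw [div_sub_one hρnpos.ne', abs_div, abs_of_pos hρnpos]
      field_simp
    rw [this, abs_sub_comm]
    exact hclose
  -- contradiction
  have hBw_lt : |R w - R x - R' (w - x)| < c := by
    have := hcont w (u n) hwK hunK hwu
    have habs := abs_sub_abs_le_abs_sub (|R w - R x - R' (w - x)|)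
      (|R (u n) - R x - R' (u n - x)|)
    have h2 : |(|R w - R x - R' (w - x)|) - (|R (u n) - R x - R' (u n - x)|)| < c / 2 := this
    have h3 := le_abs_self ((|R w - R x - R' (w - x)|) - (|R (u n) - R x - R' (u n - x)|))
    linarith
  have hBw_ge : c < |R w - R x - R' (w - x)| := by
    have hle : (⨅ (x' : X) (_ : ‖x' - x‖ = ρ),
        ENNReal.ofReal |R x' - R x - R' (x' - x)|) ≤
        ENNReal.ofReal |R w - R x - R' (w - x)| := by
      exact iInf₂_le w hwnorm
    have := lt_of_lt_of_le hc'ν hle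
    rwa [ENNReal.lt_ofReal_iff_toReal_lt hc'top] at this
  linarith
end

section
/- Let X and Y be real normed spaces such that every bounded sequence in X has a weakly convergent subsequence, let F : X → Y, and let R : X → [0,∞) be weakly sequentially lower semicontinuous and coercive. Assume 𝒟 : Y × Y → [0,∞] satisfies 𝒟(y₀,y₁) = 0 ⟺ y₀ = y₁, and: whenever x_n converges weakly to x̄ and 𝒟(y_n,y) → 0 and 𝒟(y,y_n) → 0, then 𝒟(F(x̄),y) ≤ liminf_n 𝒟(F(x_n),y_n). Suppose F(x) = y has a solution, and that at every R-minimizing solution x⁺ of F(x) = y the functional R is Gâteaux differentiable, totally nonlinear, and B_R(·, x⁺) is uniformly continuous on bounded subsets of X. Let δ_k > 0 with δ_k → 0, let y_k satisfy 𝒟(y_k,y) ≤ δ_k and 𝒟(y,y_k) ≤ δ_k, let α : (0,∞) → (0,∞) satisfy α(δ) → 0 and δ/α(δ) → 0 as δ → 0, and let x_k minimize x ↦ 𝒟(F(x), y_k) + α(δ_k)·R(x) over X. Then there exist a subsequence (x_{k(n)}) and an R-minimizing solution x⁺ with ‖x_{k(n)} − x⁺‖ → 0; if the R-minimizing solution is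 unique, then ‖x_k − x⁺‖ → 0 for the whole sequence. -/
open Filter Topology ENNReal

/-- Main subsequence extraction lemma. -/
lemma nett_sub {X Y : Type*} [NormedAddCommGroup X] [NormedSpace ℝ X]
    [NormedAddCommGroup Y] [NormedSpace ℝ Y]
    (hrefl : ∀ u : ℕ → X, (∃ M : ℝ, ∀ n, ‖u n‖ ≤ M) →
      ∃ φ : ℕ → ℕ, StrictMono φ ∧ ∃ xb : X, WConv (fun n => u (φ n)) xb)
    (F : X → Y)
    (R : X → ℝ) (hR0 : ∀ x, 0 ≤ R x)
    (hRlsc : ∀ (u : ℕ → X) (xb : X), WConv u xb →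
      R xb ≤ Filter.liminf (fun n => R (u n)) Filter.atTop)
    (hRcoer : ∀ u : ℕ → X, Tendsto (fun n => ‖u n‖) atTop atTop →
      Tendsto (fun n => R (u n)) atTop atTop)
    (𝒟 : Y → Y → ℝ≥0∞)
    (h𝒟eq : ∀ y₀ y₁ : Y, 𝒟 y₀ y₁ = 0 ↔ y₀ = y₁)
    (y : Y)
    (hjoint : ∀ (u : ℕ → X) (xb : X) (ys : ℕ → Y), WConv u xb →
      Tendsto (fun n => 𝒟 (ys n) y) atTop (𝓝 0) →
      Tendsto (fun n => 𝒟 y (ys n)) atTop (𝓝 0) →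
      𝒟 (F xb) y ≤ Filter.liminf (fun n => 𝒟 (F (u n)) (ys n)) Filter.atTop)
    (hex : ∃ x : X, F x = y)
    (hsol : ∀ xp : X, F xp = y → (∀ z : X, F z = y → R xp ≤ R z) →
      ∃ R' : X →L[ℝ] ℝ,
        (∀ v : X, Tendsto (fun t : ℝ => (R (xp + t • v) - R xp) / t)
          (𝓝[≠] (0:ℝ)) (𝓝 (R' v))) ∧
        (∀ t : ℝ, 0 < t →
          0 < ⨅ (x' : X) (_ : ‖x' - xp‖ = t),
                ENNReal.ofReal |R x' - R xp - R' (x' - xp)|) ∧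
        (∀ M : ℝ, 0 < M → ∀ ε : ℝ, 0 < ε → ∃ η : ℝ, 0 < η ∧
          ∀ u v : X, ‖u‖ ≤ M → ‖v‖ ≤ M → ‖u - v‖ < η →
            |(|R u - R xp - R' (u - xp)|) - (|R v - R xp - R' (v - xp)|)| < ε))
    (δ : ℕ → ℝ) (hδpos : ∀ k, 0 < δ k) (hδ0 : Tendsto δ atTop (𝓝 0))
    (yk : ℕ → Y) (hyk1 : ∀ k, 𝒟 (yk k) y ≤ ENNReal.ofReal (δ k))
    (hyk2 : ∀ k, 𝒟 y (yk k) ≤ ENNReal.ofReal (δ k))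
    (α : ℝ → ℝ) (hαpos : ∀ d : ℝ, 0 < d → 0 < α d)
    (hα0 : Tendsto α (𝓝[>] (0:ℝ)) (𝓝 0))
    (hδα : Tendsto (fun d => d / α d) (𝓝[>] (0:ℝ)) (𝓝 0))
    (xk : ℕ → X)
    (hmin : ∀ k, ∀ z : X,
      𝒟 (F (xk k)) (yk k) + ENNReal.ofReal (α (δ k) * R (xk k)) ≤
        𝒟 (F z) (yk k) + ENNReal.ofReal (α (δ k) * R z)) :
    ∃ φ : ℕ → ℕ, StrictMono φ ∧ ∃ xp : X,
      (F xp = y ∧ ∀ z : X, F z = y → R xp ≤ R z) ∧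
      Tendsto (fun n => ‖xk (φ n) - xp‖) atTop (𝓝 (0:ℝ)) := by
  classical
  obtain ⟨xd, hxd⟩ := hex
  have hδatTop : Tendsto δ atTop (𝓝[>] (0:ℝ)) :=
    tendsto_nhdsWithin_of_tendsto_nhds_of_eventually_within _ hδ0
      (Eventually.of_forall fun k => hδpos k)
  have hαδ0 : Tendsto (fun k => α (δ k)) atTop (𝓝 0) := hα0.comp hδatTop
  have ha0 : Tendsto (fun k => δ k / α (δ k)) atTop (𝓝 0) := hδα.comp hδatTop
  -- basic bound from minimality
  have hkey : ∀ (z : X), F z = y → ∀ k,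
      𝒟 (F (xk k)) (yk k) + ENNReal.ofReal (α (δ k) * R (xk k)) ≤
        ENNReal.ofReal (δ k + α (δ k) * R z) := by
    intro z hz k
    have h := hmin k z
    rw [hz] at h
    calc 𝒟 (F (xk k)) (yk k) + ENNReal.ofReal (α (δ k) * R (xk k))
        ≤ 𝒟 y (yk k) + ENNReal.ofReal (α (δ k) * R z) := h
      _ ≤ ENNReal.ofReal (δ k) + ENNReal.ofReal (α (δ k) * R z) :=
          add_le_add (hyk2 k) le_rfl
      _ = ENNReal.ofReal (δ k + α (δ k) * R z) := by
          rw [ENNReal.ofReal_add (hδpos k).le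
            (mul_nonneg (hαpos _ (hδpos k)).le (hR0 z))]
  have hRz : ∀ (z : X), F z = y → ∀ k, R (xk k) ≤ δ k / α (δ k) + R z := by
    intro z hz k
    have hα : (0:ℝ) < α (δ k) := hαpos _ (hδpos k)
    have h1 : ENNReal.ofReal (α (δ k) * R (xk k)) ≤
        ENNReal.ofReal (δ k + α (δ k) * R z) :=
      le_trans le_add_self (hkey z hz k)
    have hnn : (0:ℝ) ≤ δ k + α (δ k) * R z :=
      add_nonneg (hδpos k).le (mul_nonneg hα.le (hR0 z))
    have h2 : α (δ k) * R (xk k) ≤ δ k + α (δ k) * R z :=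
      (ENNReal.ofReal_le_ofReal_iff hnn).mp h1
    have h3 : R (xk k) ≤ (δ k + α (δ k) * R z) / α (δ k) := by
      rw [le_div_iff₀ hα]; nlinarith
    calc R (xk k) ≤ (δ k + α (δ k) * R z) / α (δ k) := h3
      _ = δ k / α (δ k) + R z := by
          rw [add_div, mul_div_cancel_left₀ _ hα.ne']
  -- R (xk k) is bounded above
  have hbA : BddAbove (Set.range fun k => δ k / α (δ k) + R xd) :=
    (ha0.add_const (R xd)).bddAbove_range
  obtain ⟨C, hC⟩ := hbA
  have hRC : ∀ k, R (xk k) ≤ C := fun k =>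
    (hRz xd hxd k).trans (hC (Set.mem_range_self k))
  -- the norms of xk are bounded
  have hnormb : ∃ M : ℝ, ∀ k, ‖xk k‖ ≤ M := by
    by_contra h
    push_neg at h
    choose g hg using h
    have hu : Tendsto (fun j : ℕ => ‖xk (g j)‖) atTop atTop :=
      tendsto_atTop_mono (fun j => (hg (j : ℝ)).le) tendsto_natCast_atTop_atTop
    have hRu := hRcoer (fun j => xk (g j)) hu
    obtain ⟨j, hj⟩ := (hRu.eventually_gt_atTop C).exists
    exact absurd (hRC (g j)) (not_le.mpr hj)
  obtain ⟨M, hM⟩ := hnormb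
  -- extract a weakly convergent subsequence
  obtain ⟨φ, hφ, xb, hw⟩ := hrefl xk ⟨M, hM⟩
  have hφtop : Tendsto φ atTop atTop := hφ.tendsto_atTop
  -- noise convergence along the subsequence
  have hofδ : Tendsto (fun n => ENNReal.ofReal (δ (φ n))) atTop (𝓝 0) := by
    have h := (ENNReal.tendsto_ofReal hδ0).comp hφtop
    simpa [Function.comp_def] using h
  have hyk1' : Tendsto (fun n => 𝒟 (yk (φ n)) y) atTop (𝓝 0) :=
    tendsto_of_tendsto_of_tendsto_of_le_of_le tendsto_const_nhds hofδ
      (fun n => zero_le) (fun n => hyk1 (φ n))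
  have hyk2' : Tendsto (fun n => 𝒟 y (yk (φ n))) atTop (𝓝 0) :=
    tendsto_of_tendsto_of_tendsto_of_le_of_le tendsto_const_nhds hofδ
      (fun n => zero_le) (fun n => hyk2 (φ n))
  -- the data term tends to zero along the subsequence
  have hbound0 : Tendsto (fun k => δ k + α (δ k) * R xd) atTop (𝓝 0) := by
    have h := hδ0.add (hαδ0.mul_const (R xd))
    simpa using h
  have hD0 : Tendsto (fun n => 𝒟 (F (xk (φ n))) (yk (φ n))) atTop (𝓝 0) := by
    have hub : Tendsto (fun n => ENNReal.ofReal (δ (φ n) + α (δ (φ n)) * R xd))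
        atTop (𝓝 0) := by
      have h := (ENNReal.tendsto_ofReal hbound0).comp hφtop
      simpa [Function.comp_def] using h
    refine tendsto_of_tendsto_of_tendsto_of_le_of_le tendsto_const_nhds hub
      (fun n => zero_le) (fun n => ?_)
    exact le_trans le_self_add (hkey xd hxd (φ n))
  -- F xb = y
  have hFxb : F xb = y := by
    have h := hjoint (fun n => xk (φ n)) xb (fun n => yk (φ n)) hw hyk1' hyk2'
    rw [hD0.liminf_eq] at h
    exact (h𝒟eq (F xb) y).mp (le_antisymm h (zero_le))
  -- xb is an R-minimizing solution
  have hlsc := hRlsc (fun n => xk (φ n)) xb hw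
  have hbddge : IsBoundedUnder (· ≥ ·) atTop (fun n => R (xk (φ n))) :=
    Filter.isBoundedUnder_of ⟨0, fun n => hR0 _⟩
  have hbddle : IsBoundedUnder (· ≤ ·) atTop (fun n => R (xk (φ n))) :=
    Filter.isBoundedUnder_of ⟨C, fun n => hRC _⟩
  have hminxb : ∀ z : X, F z = y → R xb ≤ R z := by
    intro z hz
    have hvz : Tendsto (fun n => δ (φ n) / α (δ (φ n)) + R z) atTop (𝓝 (R z)) := by
      have h := ((ha0.comp hφtop).add_const (R z))
      simpa using h
    have h1 : Filter.liminf (fun n => R (xk (φ n))) atTop ≤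
        Filter.liminf (fun n => δ (φ n) / α (δ (φ n)) + R z) atTop := by
      refine Filter.liminf_le_liminf (Eventually.of_forall fun n => hRz z hz (φ n))
        hbddge ?_
      exact hvz.isBoundedUnder_le.isCoboundedUnder_ge
    rw [hvz.liminf_eq] at h1
    exact hlsc.trans h1
  -- R (xk (φ n)) → R xb
  have hRconv : Tendsto (fun n => R (xk (φ n))) atTop (𝓝 (R xb)) := by
    have hvz : Tendsto (fun n => δ (φ n) / α (δ (φ n)) + R xb) atTop (𝓝 (R xb)) := by
      have h := ((ha0.comp hφtop).add_const (R xb))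
      simpa using h
    have h2 : Filter.limsup (fun n => R (xk (φ n))) atTop ≤
        Filter.limsup (fun n => δ (φ n) / α (δ (φ n)) + R xb) atTop := by
      refine Filter.limsup_le_limsup
        (Eventually.of_forall fun n => hRz xb hFxb (φ n)) ?_ ?_
      · exact hbddge.isCoboundedUnder_le
      · exact hvz.isBoundedUnder_le
    rw [hvz.limsup_eq] at h2
    exact tendsto_of_le_liminf_of_limsup_le hlsc h2 hbddle hbddge
  -- strong convergence
  obtain ⟨R', _hgat, hν, hunif⟩ := hsol xb hFxb hminxb
  -- Bregman distance tends to zero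
  have hBreg : Tendsto (fun n => |R (xk (φ n)) - R xb - R' (xk (φ n) - xb)|)
      atTop (𝓝 0) := by
    have h2 : Tendsto (fun n => R' (xk (φ n) - xb)) atTop (𝓝 0) := by
      have h := (hw R').sub_const (R' xb)
      simp only [map_sub]
      simpa using h
    have h3 : Tendsto (fun n => R (xk (φ n)) - R xb - R' (xk (φ n) - xb))
        atTop (𝓝 0) := by
      have h := (hRconv.sub_const (R xb)).sub h2
      simpa using h
    simpa using h3.abs
  have hnconv : Tendsto (fun n => ‖xk (φ n) - xb‖) atTop (𝓝 (0:ℝ)) := by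
    by_contra hcon
    rw [Metric.tendsto_atTop] at hcon
    push_neg at hcon
    obtain ⟨ε, hε, hfreq⟩ := hcon
    have hfr : ∃ᶠ n in atTop, ε ≤ ‖xk (φ n) - xb‖ := by
      rw [Filter.frequently_atTop]
      intro N
      obtain ⟨n, hn1, hn2⟩ := hfreq N
      refine ⟨n, hn1, ?_⟩
      have : dist ‖xk (φ n) - xb‖ (0:ℝ) = ‖xk (φ n) - xb‖ := by
        simp [Real.dist_eq, abs_of_nonneg (norm_nonneg _)]
      linarith [this ▸ hn2]
    obtain ⟨ψ, hψ, hψε⟩ := Filter.extraction_of_frequently_atTop hfr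
    -- the norms live in a compact interval
    have hmem : ∀ j, ‖xk (φ (ψ j)) - xb‖ ∈ Set.Icc ε (M + ‖xb‖) := by
      intro j
      refine ⟨hψε j, ?_⟩
      calc ‖xk (φ (ψ j)) - xb‖ ≤ ‖xk (φ (ψ j))‖ + ‖xb‖ := norm_sub_le _ _
        _ ≤ M + ‖xb‖ := add_le_add (hM _) le_rfl
    obtain ⟨ts, htsmem, ρ, hρ, htt⟩ :=
      isCompact_Icc.tendsto_subseq hmem
    have htspos : 0 < ts := lt_of_lt_of_le hε htsmem.1
    -- a positive lower bound c for the modulus of total nonlinearity at ts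
    obtain ⟨c, _hc0, hc1, hc2⟩ := ENNReal.lt_iff_exists_real_btwn.mp (hν ts htspos)
    have hcpos : 0 < c := ENNReal.ofReal_pos.mp (by simpa using hc1)
    have hclb : ∀ x' : X, ‖x' - xb‖ = ts → c ≤ |R x' - R xb - R' (x' - xb)| := by
      intro x' hx'
      by_contra hle
      push_neg at hle
      have h1 : (⨅ (x'' : X) (_ : ‖x'' - xb‖ = ts),
          ENNReal.ofReal |R x'' - R xb - R' (x'' - xb)|) ≤
          ENNReal.ofReal |R x' - R xb - R' (x' - xb)| := by
        exact iInf₂_le x' hx'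
      have h2 : ENNReal.ofReal c < ENNReal.ofReal |R x' - R xb - R' (x' - xb)| :=
        lt_of_lt_of_le hc2 h1
      exact absurd (ENNReal.ofReal_le_ofReal hle.le) (not_le.mpr h2)
    -- uniform continuity on a bounded set
    set Mb : ℝ := M + ‖xb‖ + ts + 1 with hMb
    have hMbpos : 0 < Mb := by
      have h1 : (0:ℝ) ≤ M := (norm_nonneg (xk 0)).trans (hM 0)
      have h2 : (0:ℝ) ≤ ‖xb‖ := norm_nonneg _
      simp only [hMb]; linarith
    obtain ⟨η, hη, hcont⟩ := hunif Mb hMbpos (c / 2) (half_pos hcpos)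
    -- pick an index where everything is small
    have hE1 : ∀ᶠ j in atTop, |‖xk (φ (ψ (ρ j))) - xb‖ - ts| < η := by
      have := Metric.tendsto_atTop.mp htt η hη
      obtain ⟨N, hN⟩ := this
      refine eventually_atTop.mpr ⟨N, fun j hj => ?_⟩
      have := hN j hj
      simpa [Real.dist_eq, Function.comp] using this
    have hE2 : ∀ᶠ j in atTop,
        |R (xk (φ (ψ (ρ j)))) - R xb - R' (xk (φ (ψ (ρ j))) - xb)| < c / 2 := by
      have h := hBreg.comp ((hψ.comp hρ).tendsto_atTop)
      have h2 := h.eventually (eventually_lt_nhds (half_pos hcpos))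
      simpa [Function.comp] using h2
    obtain ⟨j, hj1, hj2⟩ := (hE1.and hE2).exists
    set xj : X := xk (φ (ψ (ρ j))) with hxj
    set s : ℝ := ‖xj - xb‖ with hs
    have hspos : 0 < s := lt_of_lt_of_le hε (hψε (ρ j))
    set z : X := xb + (ts / s) • (xj - xb) with hz
    have hzdist : ‖z - xb‖ = ts := by
      have hzz : z - xb = (ts / s) • (xj - xb) := by simp [hz]
      rw [hzz, norm_smul, Real.norm_eq_abs, abs_of_pos (div_pos htspos hspos),
        ← hs, div_mul_cancel₀ _ hspos.ne']
    have hzxj : ‖z - xj‖ < η := by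
      have : z - xj = (ts / s - 1) • (xj - xb) := by
        simp only [hz]; module
      rw [this, norm_smul, Real.norm_eq_abs, ← hs]
      have heq : (ts / s - 1) * s = ts - s := by field_simp
      have : |ts / s - 1| * s = |ts - s| := by
        calc |ts / s - 1| * s = |ts / s - 1| * |s| := by rw [abs_of_pos hspos]
          _ = |(ts / s - 1) * s| := (abs_mul _ _).symm
          _ = |ts - s| := by rw [heq]
      rw [this]
      rw [abs_sub_comm]
      exact hj1
    have hzb : ‖z‖ ≤ Mb := by
      calc ‖z‖ ≤ ‖xb‖ + ‖z - xb‖ := norm_le_insert' z xb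
        _ = ‖xb‖ + ts := by rw [hzdist]
        _ ≤ Mb := by
            have h1 : (0:ℝ) ≤ M := (norm_nonneg (xk 0)).trans (hM 0)
            simp only [hMb]; linarith
    have hxjb : ‖xj‖ ≤ Mb := by
      have h2 : (0:ℝ) ≤ ‖xb‖ := norm_nonneg _
      calc ‖xj‖ ≤ M := hM _
        _ ≤ Mb := by simp only [hMb]; linarith [htspos.le]
    have hclose := hcont z xj hzb hxjb hzxj
    have hBz : c ≤ |R z - R xb - R' (z - xb)| := hclb z hzdist
    have : |R z - R xb - R' (z - xb)| < c := by
      have h1 : |R z - R xb - R' (z - xb)| - |R xj - R xb - R' (xj - xb)| < c / 2 :=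
        lt_of_abs_lt hclose
      linarith [hj2]
    exact absurd hBz (not_le.mpr this)
  exact ⟨φ, hφ, xb, ⟨hFxb, hminxb⟩, hnconv⟩

/-- Strong convergence of NETT regularization for totally nonlinear regularizers. -/
theorem statement9 {X Y : Type*} [NormedAddCommGroup X] [NormedSpace ℝ X]
    [NormedAddCommGroup Y] [NormedSpace ℝ Y]
    -- every bounded sequence in X has a weakly convergent subsequence
    (hrefl : ∀ u : ℕ → X, (∃ M : ℝ, ∀ n, ‖u n‖ ≤ M) →
      ∃ φ : ℕ → ℕ, StrictMono φ ∧ ∃ xb : X, WConv (fun n => u (φ n)) xb)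
    (F : X → Y)
    (R : X → ℝ) (hR0 : ∀ x, 0 ≤ R x)
    -- R is weakly sequentially lower semicontinuous
    (hRlsc : ∀ (u : ℕ → X) (xb : X), WConv u xb →
      R xb ≤ Filter.liminf (fun n => R (u n)) Filter.atTop)
    -- R is coercive
    (hRcoer : ∀ u : ℕ → X, Tendsto (fun n => ‖u n‖) atTop atTop →
      Tendsto (fun n => R (u n)) atTop atTop)
    (𝒟 : Y → Y → ℝ≥0∞)
    (h𝒟eq : ∀ y₀ y₁ : Y, 𝒟 y₀ y₁ = 0 ↔ y₀ = y₁)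
    (y : Y)
    -- joint sequential lower semicontinuity of the data term
    (hjoint : ∀ (u : ℕ → X) (xb : X) (ys : ℕ → Y), WConv u xb →
      Tendsto (fun n => 𝒟 (ys n) y) atTop (𝓝 0) →
      Tendsto (fun n => 𝒟 y (ys n)) atTop (𝓝 0) →
      𝒟 (F xb) y ≤ Filter.liminf (fun n => 𝒟 (F (u n)) (ys n)) Filter.atTop)
    -- the equation F(x) = y has a solution
    (hex : ∃ x : X, F x = y)
    -- at every R-minimizing solution, R is Gâteaux differentiable, totally nonlinear,
    -- and its absolute Bregman distance is uniformly continuous on bounded sets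
    (hsol : ∀ xp : X, F xp = y → (∀ z : X, F z = y → R xp ≤ R z) →
      ∃ R' : X →L[ℝ] ℝ,
        (∀ v : X, Tendsto (fun t : ℝ => (R (xp + t • v) - R xp) / t)
          (𝓝[≠] (0:ℝ)) (𝓝 (R' v))) ∧
        (∀ t : ℝ, 0 < t →
          0 < ⨅ (x' : X) (_ : ‖x' - xp‖ = t),
                ENNReal.ofReal |R x' - R xp - R' (x' - xp)|) ∧
        (∀ M : ℝ, 0 < M → ∀ ε : ℝ, 0 < ε → ∃ η : ℝ, 0 < η ∧
          ∀ u v : X, ‖u‖ ≤ M → ‖v‖ ≤ M → ‖u - v‖ < η →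
            |(|R u - R xp - R' (u - xp)|) - (|R v - R xp - R' (v - xp)|)| < ε))
    -- noise levels
    (δ : ℕ → ℝ) (hδpos : ∀ k, 0 < δ k) (hδ0 : Tendsto δ atTop (𝓝 0))
    -- noisy data
    (yk : ℕ → Y) (hyk1 : ∀ k, 𝒟 (yk k) y ≤ ENNReal.ofReal (δ k))
    (hyk2 : ∀ k, 𝒟 y (yk k) ≤ ENNReal.ofReal (δ k))
    -- parameter choice rule
    (α : ℝ → ℝ) (hαpos : ∀ d : ℝ, 0 < d → 0 < α d)
    (hα0 : Tendsto α (𝓝[>] (0:ℝ)) (𝓝 0))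
    (hδα : Tendsto (fun d => d / α d) (𝓝[>] (0:ℝ)) (𝓝 0))
    -- minimizers of the Tikhonov functional over X
    (xk : ℕ → X)
    (hmin : ∀ k, ∀ z : X,
      𝒟 (F (xk k)) (yk k) + ENNReal.ofReal (α (δ k) * R (xk k)) ≤
        𝒟 (F z) (yk k) + ENNReal.ofReal (α (δ k) * R z)) :
    -- a subsequence converges in norm to an R-minimizing solution
    (∃ φ : ℕ → ℕ, StrictMono φ ∧ ∃ xp : X,
      (F xp = y ∧ ∀ z : X, F z = y → R xp ≤ R z) ∧
      Tendsto (fun n => ‖xk (φ n) - xp‖) atTop (𝓝 (0:ℝ))) ∧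
    -- if the R-minimizing solution is unique, the whole sequence converges in norm
    (∀ xp : X, F xp = y → (∀ z : X, F z = y → R xp ≤ R z) →
      (∀ z : X, F z = y → (∀ w : X, F w = y → R z ≤ R w) → z = xp) →
      Tendsto (fun k => ‖xk k - xp‖) atTop (𝓝 (0:ℝ))) := by
  constructor
  · exact nett_sub hrefl F R hR0 hRlsc hRcoer 𝒟 h𝒟eq y hjoint hex hsol
      δ hδpos hδ0 yk hyk1 hyk2 α hαpos hα0 hδα xk hmin
  · intro xp hFxp _hminxp huniq
    refine Filter.tendsto_of_subseq_tendsto fun ns hns => ?_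
    obtain ⟨φ, _hφ, xp', ⟨hF', hmin'⟩, hconv⟩ :=
      nett_sub hrefl F R hR0 hRlsc hRcoer 𝒟 h𝒟eq y hjoint hex hsol
        (fun k => δ (ns k)) (fun k => hδpos (ns k)) (hδ0.comp hns)
        (fun k => yk (ns k)) (fun k => hyk1 (ns k)) (fun k => hyk2 (ns k))
        α hαpos hα0 hδα
        (fun k => xk (ns k)) (fun k => hmin (ns k))
    have hxe : xp' = xp := huniq xp' hF' hmin'
    exact ⟨φ, by simpa [hxe] using hconv⟩
end

section
/- Let X and Y be real normed spaces, D ⊆ X, F : D → Y, and let 𝒟 : Y × Y → [0,∞] satisfy the quasi-triangle inequality 𝒟(y₀,y₁) ≤ τ·𝒟(y₀,y₂) + τ·𝒟(y₂,y₁) for all y₀,y₁,y₂ ∈ Y and some τ ≥ 1. Let R : X → [0,∞), E : X × X → [0,∞], x⁺ ∈ D with y := F(x⁺), β > 0, ε > 0, and let Φ : [0,∞) → [0,∞) be concave, continuous, strictly increasing with Φ(0) = 0. Assume the variational inequality: for every x ∈ D with |R(x) − R(x⁺)| < ε one has β·E(x, x⁺) ≤ R(x) − R(x⁺) + Φ(𝒟(F(x),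 F(x⁺))). Let δ > 0, α > 0, let y_δ ∈ Y satisfy 𝒟(y, y_δ) ≤ δ and 𝒟(y_δ, y) ≤ δ, let x_{α,δ} ∈ D minimize x ↦ 𝒟(F(x), y_δ) + α·R(x) over D, and assume |R(x_{α,δ}) − R(x⁺)| < ε. Then β·E(x_{α,δ}, x⁺) ≤ δ/α + Φ(τδ) + Φ^{-*}(τα)/(τα), where Φ^{-*}(s) := sup{ s·Φ(u) − u : u ≥ 0 }. -/
open Filter Topology ENNReal

/-- `Φ^{-*}(s) = sup { s·Φ(u) − u : u ≥ 0 }`, the Fenchel conjugate of the inverse of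
`Φ`, valued in `[0, ∞]`. -/
noncomputable def Phiconj (Φ : ℝ → ℝ) (s : ℝ) : ℝ≥0∞ :=
  ⨆ u : {u : ℝ // 0 ≤ u}, ENNReal.ofReal (s * Φ u - u)

/-- Convergence rates for NETT: quantitative error estimate under a variational
inequality. -/
theorem statement10 {X Y : Type*} [NormedAddCommGroup X] [NormedSpace ℝ X]
    [NormedAddCommGroup Y] [NormedSpace ℝ Y]
    (D : Set X) (F : X → Y)
    (𝒟 : Y → Y → ℝ) (h𝒟0 : ∀ y₀ y₁ : Y, 0 ≤ 𝒟 y₀ y₁)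
    (τ : ℝ) (hτ : 1 ≤ τ)
    -- quasi-triangle inequality for the data fidelity
    (htri : ∀ y₀ y₁ y₂ : Y, 𝒟 y₀ y₁ ≤ τ * 𝒟 y₀ y₂ + τ * 𝒟 y₂ y₁)
    (R : X → ℝ) (hR0 : ∀ x, 0 ≤ R x)
    (E : X → X → ℝ) (hE0 : ∀ x₁ x₂, 0 ≤ E x₁ x₂)
    (xp : X) (hxpD : xp ∈ D) (y : Y) (hy : y = F xp)
    (β ε : ℝ) (hβ : 0 < β) (hε : 0 < ε)
    (Φ : ℝ → ℝ)
    (hconc : ConcaveOn ℝ (Set.Ici (0:ℝ)) Φ)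
    (hcont : ContinuousOn Φ (Set.Ici (0:ℝ)))
    (hmono : StrictMonoOn Φ (Set.Ici (0:ℝ)))
    (hΦ0 : Φ 0 = 0) (hΦnonneg : ∀ t : ℝ, 0 ≤ t → 0 ≤ Φ t)
    -- the variational inequality
    (hvar : ∀ x ∈ D, |R x - R xp| < ε →
      β * E x xp ≤ R x - R xp + Φ (𝒟 (F x) (F xp)))
    (δ α : ℝ) (hδ : 0 < δ) (hα : 0 < α)
    (yδ : Y) (h1 : 𝒟 y yδ ≤ δ) (h2 : 𝒟 yδ y ≤ δ)
    -- x_{α,δ} minimizes the Tikhonov functional over D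
    (xad : X) (hxadD : xad ∈ D)
    (hmin : ∀ z ∈ D, 𝒟 (F xad) yδ + α * R xad ≤ 𝒟 (F z) yδ + α * R z)
    (hnear : |R xad - R xp| < ε) :
    ENNReal.ofReal (β * E xad xp) ≤
      ENNReal.ofReal (δ / α + Φ (τ * δ)) +
        Phiconj Φ (τ * α) / ENNReal.ofReal (τ * α) := by

  subst hy
  have hτ0 : (0:ℝ) < τ := lt_of_lt_of_le one_pos hτ
  set d := 𝒟 (F xad) yδ with hd
  have hd0 : 0 ≤ d := h𝒟0 _ _
  -- subadditivity of Φ on [0, ∞)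
  have hsub : ∀ a b : ℝ, 0 ≤ a → 0 ≤ b → Φ (a + b) ≤ Φ a + Φ b := by
    intro a b ha hb
    rcases eq_or_lt_of_le (add_nonneg ha hb) with hs | hs
    · have ha0 : a = 0 := by linarith
      have hb0 : b = 0 := by linarith
      simp [ha0, hb0, hΦ0]
    · have hsmem : (a + b : ℝ) ∈ Set.Ici (0:ℝ) := le_of_lt hs
      have h0mem : (0:ℝ) ∈ Set.Ici (0:ℝ) := Set.mem_Ici.mpr le_rfl
      have hA := hconc.2 hsmem h0mem (div_nonneg ha hs.le) (div_nonneg hb hs.le)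
        (by field_simp)
      have hB := hconc.2 hsmem h0mem (div_nonneg hb hs.le) (div_nonneg ha hs.le)
        (by field_simp; ring)
      have hxa : (a/(a+b)) • (a+b) + (b/(a+b)) • (0:ℝ) = a := by
        rw [smul_eq_mul, smul_eq_mul, mul_zero, add_zero, div_mul_cancel₀ _ hs.ne']
      have hxb : (b/(a+b)) • (a+b) + (a/(a+b)) • (0:ℝ) = b := by
        rw [smul_eq_mul, smul_eq_mul, mul_zero, add_zero, div_mul_cancel₀ _ hs.ne']
      rw [hxa] at hA
      rw [hxb] at hB
      simp only [smul_eq_mul, hΦ0, mul_zero, add_zero] at hA hB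
      have : (a/(a+b)) * Φ (a+b) + (b/(a+b)) * Φ (a+b) = Φ (a+b) := by
        field_simp
      linarith
  -- minimality gives R xad - R xp ≤ (δ - d)/α
  have hmin' : d + α * R xad ≤ δ + α * R xp := by
    have := hmin xp hxpD
    calc d + α * R xad ≤ 𝒟 (F xp) yδ + α * R xp := this
      _ ≤ δ + α * R xp := by linarith [h1]
  have hRle : R xad - R xp ≤ (δ - d) / α := by
    rw [le_div_iff₀ hα]
    nlinarith
  -- bound on data fidelity at y
  have hDle : 𝒟 (F xad) (F xp) ≤ τ * d + τ * δ := by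
    calc 𝒟 (F xad) (F xp) ≤ τ * d + τ * 𝒟 yδ (F xp) := htri _ _ _
      _ ≤ τ * d + τ * δ := by nlinarith [h2]
  have hmonoΦ : Φ (𝒟 (F xad) (F xp)) ≤ Φ (τ * d) + Φ (τ * δ) := by
    have h1' : Φ (𝒟 (F xad) (F xp)) ≤ Φ (τ * d + τ * δ) := by
      rcases eq_or_lt_of_le hDle with h | h
      · rw [h]
      · exact le_of_lt (hmono (h𝒟0 _ _)
          (by positivity : (0:ℝ) ≤ τ * d + τ * δ) h)
    exact h1'.trans (hsub _ _ (by positivity) (by positivity))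
  -- main real estimate
  have hmain : β * E xad xp ≤ (δ / α + Φ (τ * δ)) + (Φ (τ * d) - d / α) := by
    have hv := hvar xad hxadD hnear
    have : (δ - d) / α = δ / α - d / α := by ring
    linarith [hv, hRle, hmonoΦ, this ▸ hRle]
  -- pass to ENNReal
  have step1 : ENNReal.ofReal (β * E xad xp) ≤
      ENNReal.ofReal ((δ / α + Φ (τ * δ)) + (Φ (τ * d) - d / α)) :=
    ENNReal.ofReal_le_ofReal hmain
  have step2 : ENNReal.ofReal ((δ / α + Φ (τ * δ)) + (Φ (τ * d) - d / α)) ≤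
      ENNReal.ofReal (δ / α + Φ (τ * δ)) + ENNReal.ofReal (Φ (τ * d) - d / α) :=
    ENNReal.ofReal_add_le
  have hτα : (0:ℝ) < τ * α := by positivity
  have step3 : ENNReal.ofReal (Φ (τ * d) - d / α) ≤
      Phiconj Φ (τ * α) / ENNReal.ofReal (τ * α) := by
    have heq : Φ (τ * d) - d / α = ((τ * α) * Φ (τ * d) - τ * d) / (τ * α) := by
      field_simp
    rw [heq, ENNReal.ofReal_div_of_pos hτα]
    apply ENNReal.div_le_div_right
    have : ENNReal.ofReal ((τ * α) * Φ (τ * d) - τ * d) ≤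
        ⨆ u : {u : ℝ // 0 ≤ u}, ENNReal.ofReal ((τ * α) * Φ u - u) :=
      le_iSup (fun u : {u : ℝ // 0 ≤ u} => ENNReal.ofReal ((τ * α) * Φ u - u))
        ⟨τ * d, by positivity⟩
    exact this
  calc ENNReal.ofReal (β * E xad xp)
      ≤ ENNReal.ofReal (δ / α + Φ (τ * δ)) + ENNReal.ofReal (Φ (τ * d) - d / α) :=
        step1.trans step2
    _ ≤ ENNReal.ofReal (δ / α + Φ (τ * δ)) + Phiconj Φ (τ * α) / ENNReal.ofReal (τ * α) :=
        add_le_add le_rfl step3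
end

section
/- Let X and Y be real normed spaces, D ⊆ X, F : D → Y, and let 𝒟 : Y × Y → [0,∞] satisfy 𝒟(y₀,y₁) ≤ τ·𝒟(y₀,y₂) + τ·𝒟(y₂,y₁) for all y₀,y₁,y₂ ∈ Y and some τ ≥ 1. Let R : X → [0,∞), E : X × X → [0,∞], x⁺ ∈ D with y := F(x⁺), β > 0, ε > 0, and let Φ : [0,∞) → [0,∞) be concave, continuous, strictly increasing with Φ(0) = 0. Assume: for every x ∈ D with |R(x) − R(x⁺)| < ε one has β·E(x, x⁺) ≤ R(x) − R(x⁺) + Φ(𝒟(F(x), F(x⁺))). Let δ > 0, set α := δ/Φ(τδ), let y_δ ∈ Y satisfy 𝒟(y, y_δ) ≤ δ and 𝒟(y_δ, y) ≤ δ, let x_{α,δ} ∈ D minimize x ↦ 𝒟(F(x), y_δ) + α·R(x) over D, and assume |R(x_{α,δ}) − R(x⁺)| < ε. Then β·E(x_{α,δ}, x⁺) ≤ 3·Φ(τδ). -/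
open Filter Topology ENNReal


lemma conc_scale (Φ : ℝ → ℝ) (hconc : ConcaveOn ℝ (Set.Ici (0:ℝ)) Φ) (hΦ0 : Φ 0 = 0)
    {c t : ℝ} (hc : 1 ≤ c) (ht : 0 ≤ t) : Φ (c * t) ≤ c * Φ t := by
  have hc0 : 0 < c := lt_of_lt_of_le one_pos hc
  have hx : c * t ∈ Set.Ici (0:ℝ) := mul_nonneg hc0.le ht
  have hy : (0:ℝ) ∈ Set.Ici (0:ℝ) := Set.mem_Ici.2 le_rfl
  have ha : (0:ℝ) ≤ 1 / c := by positivity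
  have hb : (0:ℝ) ≤ 1 - 1 / c := by
    have : 1 / c ≤ 1 := by rw [div_le_one hc0]; exact hc
    linarith
  have hab : 1 / c + (1 - 1 / c) = 1 := by ring
  have := hconc.2 hx hy ha hb hab
  simp only [smul_eq_mul, mul_zero, add_zero, hΦ0] at this
  have heq : 1 / c * (c * t) = t := by field_simp
  rw [heq] at this
  calc Φ (c * t) = c * (1 / c * Φ (c * t)) := by field_simp
    _ ≤ c * Φ t := by nlinarith

/-- Convergence rate for NETT with the a-priori parameter choice `α = δ / Φ(τδ)`. -/
theorem statement11 {X Y : Type*} [NormedAddCommGroup X] [NormedSpace ℝ X]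
    [NormedAddCommGroup Y] [NormedSpace ℝ Y]
    (D : Set X) (F : X → Y)
    (𝒟 : Y → Y → ℝ) (h𝒟0 : ∀ y₀ y₁ : Y, 0 ≤ 𝒟 y₀ y₁)
    (τ : ℝ) (hτ : 1 ≤ τ)
    -- quasi-triangle inequality for the data fidelity
    (htri : ∀ y₀ y₁ y₂ : Y, 𝒟 y₀ y₁ ≤ τ * 𝒟 y₀ y₂ + τ * 𝒟 y₂ y₁)
    (R : X → ℝ) (hR0 : ∀ x, 0 ≤ R x)
    (E : X → X → ℝ) (hE0 : ∀ x₁ x₂, 0 ≤ E x₁ x₂)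
    (xp : X) (hxpD : xp ∈ D) (y : Y) (hy : y = F xp)
    (β ε : ℝ) (hβ : 0 < β) (hε : 0 < ε)
    (Φ : ℝ → ℝ)
    (hconc : ConcaveOn ℝ (Set.Ici (0:ℝ)) Φ)
    (hcont : ContinuousOn Φ (Set.Ici (0:ℝ)))
    (hmono : StrictMonoOn Φ (Set.Ici (0:ℝ)))
    (hΦ0 : Φ 0 = 0) (hΦnonneg : ∀ t : ℝ, 0 ≤ t → 0 ≤ Φ t)
    -- the variational inequality
    (hvar : ∀ x ∈ D, |R x - R xp| < ε →
      β * E x xp ≤ R x - R xp + Φ (𝒟 (F x) (F xp)))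
    (δ α : ℝ) (hδ : 0 < δ)
    -- parameter choice α = δ / Φ(τδ)
    (hαdef : α = δ / Φ (τ * δ))
    (yδ : Y) (h1 : 𝒟 y yδ ≤ δ) (h2 : 𝒟 yδ y ≤ δ)
    -- x_{α,δ} minimizes the Tikhonov functional over D
    (xad : X) (hxadD : xad ∈ D)
    (hmin : ∀ z ∈ D, 𝒟 (F xad) yδ + α * R xad ≤ 𝒟 (F z) yδ + α * R z)
    (hnear : |R xad - R xp| < ε) :
    β * E xad xp ≤ 3 * Φ (τ * δ) := by
  set d := 𝒟 (F xad) yδ with hd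
  have hd0 : 0 ≤ d := h𝒟0 _ _
  have hτδ : 0 < τ * δ := mul_pos (lt_of_lt_of_le one_pos hτ) hδ
  have hP : 0 < Φ (τ * δ) := by
    have := hmono (Set.mem_Ici.2 le_rfl) (Set.mem_Ici.2 hτδ.le) hτδ
    rwa [hΦ0] at this
  have hα : 0 < α := by rw [hαdef]; positivity
  have hαP : α * Φ (τ * δ) = δ := by rw [hαdef, div_mul_eq_mul_div, mul_div_assoc, div_self hP.ne', mul_one]
  -- minimality at xp
  have hmin' := hmin xp hxpD
  rw [← hy] at hmin'
  have hR1 : α * (R xad - R xp) ≤ δ - d := by nlinarith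
  -- quasi-triangle
  have htri' : 𝒟 (F xad) (F xp) ≤ τ * d + τ * δ := by
    rw [← hy]
    have h3 := htri (F xad) y yδ
    have hτ2 : τ * 𝒟 yδ y ≤ τ * δ := by nlinarith
    linarith
  have hmono' : Φ (𝒟 (F xad) (F xp)) ≤ Φ (τ * d + τ * δ) := by
    rcases eq_or_lt_of_le htri' with h | h
    · rw [h]
    · exact le_of_lt (hmono (Set.mem_Ici.2 (h𝒟0 _ _)) (Set.mem_Ici.2 (by positivity)) h)
  have hc1 : (1:ℝ) ≤ 1 + d / δ := by
    have : 0 ≤ d / δ := by positivity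
    linarith
  have hscale : Φ (τ * d + τ * δ) ≤ (1 + d / δ) * Φ (τ * δ) := by
    have heq : (1 + d / δ) * (τ * δ) = τ * d + τ * δ := by field_simp; ring
    have := conc_scale Φ hconc hΦ0 hc1 hτδ.le
    rwa [heq] at this
  have hRle : R xad - R xp ≤ (δ - d) * Φ (τ * δ) / δ := by
    rw [le_div_iff₀ hδ]
    have h4 := mul_le_mul_of_nonneg_right hR1 hP.le
    nlinarith [hαP]
  have hvar' := hvar xad hxadD hnear
  have heq2 : (δ - d) * Φ (τ * δ) / δ + (1 + d / δ) * Φ (τ * δ) = 2 * Φ (τ * δ) := by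
    field_simp; ring
  linarith
end

section
/- Let X and Y be real Hilbert spaces, F : X → Y a bounded linear operator, and let R : X → ℝ be Gâteaux differentiable at x⁺ ∈ X with derivative R'(x⁺) (a continuous linear functional). Let C ≥ 0, δ > 0, α > 0, let y_δ ∈ Y satisfy ‖F(x⁺) − y_δ‖ ≤ δ, and let x_{α,δ} minimize x ↦ ‖F(x) − y_δ‖² + α·R(x) over X. Assume that B_R(x_{α,δ}, x⁺) ≤ R(x_{α,δ}) − R(x⁺) + C·‖F(x_{α,δ}) − F(x⁺)‖. Then B_R(x_{α,δ}, x⁺) ≤ δ²/α + C·δ + C²·α/4. In particular, for α = δ one has B_R(x_{α,δ}, x⁺) ≤ (1 + C + C²/4)·δ. -/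
open Filter Topology

/-- Quantitative estimate for the absolute Bregman distance of Tikhonov minimizers in
Hilbert spaces: `B_R(x_{α,δ}, x⁺) ≤ δ²/α + Cδ + C²α/4`, and `≤ (1 + C + C²/4)δ` for
`α = δ`. -/
theorem statement13 {X Y : Type*}
    [NormedAddCommGroup X] [InnerProductSpace ℝ X] [CompleteSpace X]
    [NormedAddCommGroup Y] [InnerProductSpace ℝ Y] [CompleteSpace Y]
    (F : X →L[ℝ] Y) (R : X → ℝ) (xp : X) (R' : X →L[ℝ] ℝ)
    -- R is Gâteaux differentiable at x⁺ with derivative R'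
    (hgat : ∀ v : X, Tendsto (fun t : ℝ => (R (xp + t • v) - R xp) / t)
      (𝓝[≠] (0:ℝ)) (𝓝 (R' v)))
    (C δ α : ℝ) (hC : 0 ≤ C) (hδ : 0 < δ) (hα : 0 < α)
    (yδ : Y) (hyδ : ‖F xp - yδ‖ ≤ δ)
    -- x_{α,δ} minimizes the Tikhonov functional over X
    (xad : X)
    (hmin : ∀ z : X, ‖F xad - yδ‖ ^ 2 + α * R xad ≤ ‖F z - yδ‖ ^ 2 + α * R z)
    -- assumed bound on the absolute Bregman distance
    (hB : |R xad - R xp - R' (xad - xp)| ≤ R xad - R xp + C * ‖F xad - F xp‖) :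
    |R xad - R xp - R' (xad - xp)| ≤ δ ^ 2 / α + C * δ + C ^ 2 * α / 4 ∧
    (α = δ → |R xad - R xp - R' (xad - xp)| ≤ (1 + C + C ^ 2 / 4) * δ) := by
  have h1 := hmin xp
  have hr : (0:ℝ) ≤ ‖F xad - yδ‖ := norm_nonneg _
  have hsq : ‖F xp - yδ‖ ^ 2 ≤ δ ^ 2 := by
    have := norm_nonneg (F xp - yδ); nlinarith
  have hR : α * (R xad - R xp) ≤ δ ^ 2 - ‖F xad - yδ‖ ^ 2 := by nlinarith
  have htri : ‖F xad - F xp‖ ≤ ‖F xad - yδ‖ + δ := by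
    have h := norm_sub_le (F xad - yδ) (F xp - yδ)
    rw [sub_sub_sub_cancel_right] at h
    linarith
  have key : |R xad - R xp - R' (xad - xp)| ≤ δ ^ 2 / α + C * δ + C ^ 2 * α / 4 := by
    have h2 : R xad - R xp ≤ (δ ^ 2 - ‖F xad - yδ‖ ^ 2) / α := by
      rw [le_div_iff₀ hα]; nlinarith
    have h3 : C * ‖F xad - F xp‖ ≤ C * (‖F xad - yδ‖ + δ) :=
      mul_le_mul_of_nonneg_left htri hC
    have h4 : (δ ^ 2 - ‖F xad - yδ‖ ^ 2) / α + C * ‖F xad - yδ‖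
        ≤ δ ^ 2 / α + C ^ 2 * α / 4 := by
      have hx : ‖F xad - yδ‖ ^ 2 / α * α = ‖F xad - yδ‖ ^ 2 :=
        div_mul_cancel₀ _ hα.ne'
      rw [sub_div]
      nlinarith [sq_nonneg (C * α - 2 * ‖F xad - yδ‖), hx]
    linarith
  refine ⟨key, fun h => ?_⟩
  subst h
  have : α ^ 2 / α = α := by field_simp
  calc |R xad - R xp - R' (xad - xp)| ≤ α ^ 2 / α + C * α + C ^ 2 * α / 4 := key
    _ = (1 + C + C ^ 2 / 4) * α := by rw [this]; ring
end

section
/- Let X and Y be real Hilbert spaces and let F : X → Y be a bounded linear operator. Let R : X → ℝ be Gâteaux differentiable at x⁺ ∈ X and assume the source condition R'(x⁺) = F*ξ for some ξ ∈ Y, i.e. R'(x⁺)(v) = ⟨ξ, F(v)⟩ for all v ∈ X. Assume moreover there exist γ > 0 and ε > 0 such that R(x⁺) − R(x) ≤ γ·‖F(x) − F(x⁺)‖ for all x ∈ X with |R(x) − R(x⁺)| < ε. Then, with C := ‖ξ‖ + 2γ, for every x ∈ X with |R(x) − R(x⁺)| < ε one has B_R(x, x⁺) ≤ R(x) − R(x⁺)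 + C·‖F(x) − F(x⁺)‖. -/
open Filter Topology RealInnerProductSpace

/-- Under the source condition `R'(x⁺) = F*ξ` and the smallness condition
`R(x⁺) − R(x) ≤ γ‖F(x) − F(x⁺)‖`, the absolute Bregman distance satisfies
`B_R(x, x⁺) ≤ R(x) − R(x⁺) + C‖F(x) − F(x⁺)‖` with `C = ‖ξ‖ + 2γ`. -/
theorem statement14 {X Y : Type*}
    [NormedAddCommGroup X] [InnerProductSpace ℝ X] [CompleteSpace X]
    [NormedAddCommGroup Y] [InnerProductSpace ℝ Y] [CompleteSpace Y]
    (F : X →L[ℝ] Y) (R : X → ℝ) (xp : X) (R' : X →L[ℝ] ℝ)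
    -- R is Gâteaux differentiable at x⁺ with derivative R'
    (hgat : ∀ v : X, Tendsto (fun t : ℝ => (R (xp + t • v) - R xp) / t)
      (𝓝[≠] (0:ℝ)) (𝓝 (R' v)))
    -- source condition R'(x⁺) = F*ξ
    (ξ : Y) (hsource : ∀ v : X, R' v = ⟪ξ, F v⟫)
    (γ ε : ℝ) (hγ : 0 < γ) (hε : 0 < ε)
    (hbound : ∀ x : X, |R x - R xp| < ε → R xp - R x ≤ γ * ‖F x - F xp‖) :
    ∀ x : X, |R x - R xp| < ε →
      |R x - R xp - R' (x - xp)| ≤ R x - R xp + (‖ξ‖ + 2 * γ) * ‖F x - F xp‖ := by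
  intro x hx
  have h1 : |R' (x - xp)| ≤ ‖ξ‖ * ‖F x - F xp‖ := by
    rw [hsource]
    calc |⟪ξ, F (x - xp)⟫| ≤ ‖ξ‖ * ‖F (x - xp)‖ := abs_real_inner_le_norm _ _
      _ = ‖ξ‖ * ‖F x - F xp‖ := by rw [map_sub]
  have h2 := hbound x hx
  have hn : (0:ℝ) ≤ ‖F x - F xp‖ := norm_nonneg _
  have h3 : |R x - R xp| ≤ R x - R xp + 2 * γ * ‖F x - F xp‖ := by
    rcases abs_cases (R x - R xp) with ⟨he, _⟩ | ⟨he, _⟩ <;> rw [he] <;> nlinarith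
  calc |R x - R xp - R' (x - xp)| ≤ |R x - R xp| + |R' (x - xp)| := abs_sub _ _
    _ ≤ R x - R xp + (‖ξ‖ + 2 * γ) * ‖F x - F xp‖ := by nlinarith
end

section
/- Let X and Y be real normed spaces, D ⊆ X, F : D → Y, and let 𝒟 : Y × Y → [0,∞] satisfy 𝒟(y₀,y₁) ≤ τ·𝒟(y₀,y₂) + τ·𝒟(y₂,y₁) for all y₀,y₁,y₂ ∈ Y and some τ ≥ 1. Let R : X → [0,∞), E : X × X → [0,∞], x⁺ ∈ D with y := F(x⁺), β > 0, ε > 0, and let Φ : [0,∞) → [0,∞) be concave, continuous, strictly increasing with Φ(0) = 0. Assume: for every x ∈ D with |R(x) − R(x⁺)| < ε one has β·E(x, x⁺) ≤ R(x) − R(x⁺) + Φ(𝒟(F(x), F(x⁺))). Suppose additionally there is C > 0 with Φ(t) ≤ C·t for all t ≥ 0, and let δ > 0, α > 0 with C·τ·α ≤ 1 (exact penalization: α need not tend to 0). Let y_δ satisfy 𝒟(y, y_δ) ≤ δ and 𝒟(y_δ, y) ≤ δ, let x_{α,δ} ∈ D minimize x ↦ 𝒟(F(x), y_δ) + α·R(x)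 over D, and assume |R(x_{α,δ}) − R(x⁺)| < ε. Then Φ^{-*}(τα) = 0, where Φ^{-*}(s) := sup{ s·Φ(u) − u : u ≥ 0 }, and consequently β·E(x_{α,δ}, x⁺) ≤ δ/α + Φ(τδ) ≤ δ/α + C·τ·δ. -/
open Filter Topology ENNReal

private lemma concave_subadd {Φ : ℝ → ℝ} (hconc : ConcaveOn ℝ (Set.Ici (0:ℝ)) Φ)
    (hΦ0 : Φ 0 = 0) {a b : ℝ} (ha : 0 ≤ a) (hb : 0 ≤ b) :
    Φ (a + b) ≤ Φ a + Φ b := by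
  rcases eq_or_lt_of_le (add_nonneg ha hb) with h | h
  · have ha0 : a = 0 := by linarith
    have hb0 : b = 0 := by linarith
    simp [ha0, hb0, hΦ0]
  · set s := a + b with hs
    have h1 : a / s * Φ s + b / s * Φ 0 ≤ Φ (a / s * s + b / s * 0) := by
      apply hconc.2 (Set.mem_Ici.2 (le_of_lt h)) (Set.mem_Ici.2 le_rfl)
        (by positivity) (by positivity)
      field_simp
      linarith
    have h2 : b / s * Φ s + a / s * Φ 0 ≤ Φ (b / s * s + a / s * 0) := by
      apply hconc.2 (Set.mem_Ici.2 (le_of_lt h)) (Set.mem_Ici.2 le_rfl)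
        (by positivity) (by positivity)
      field_simp
      linarith
    have e1 : a / s * s + b / s * 0 = a := by field_simp; ring
    have e2 : b / s * s + a / s * 0 = b := by field_simp; ring
    rw [e1, hΦ0] at h1
    rw [e2, hΦ0] at h2
    have hsum : a / s + b / s = 1 := by field_simp; linarith
    calc Φ s = (a / s + b / s) * Φ s := by rw [hsum]; ring
    _ = a / s * Φ s + b / s * Φ s := by ring
    _ ≤ Φ a + Φ b := by linarith

/-- Exact penalization: if `Φ(t) ≤ C·t` and `C·τ·α ≤ 1`, then `Φ^{-*}(τα) = 0` and
the error estimate `β·E(x_{α,δ}, x⁺) ≤ δ/α + Φ(τδ) ≤ δ/α + C·τ·δ` holds. -/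
theorem statement15 {X Y : Type*} [NormedAddCommGroup X] [NormedSpace ℝ X]
    [NormedAddCommGroup Y] [NormedSpace ℝ Y]
    (D : Set X) (F : X → Y)
    (𝒟 : Y → Y → ℝ) (h𝒟0 : ∀ y₀ y₁ : Y, 0 ≤ 𝒟 y₀ y₁)
    (τ : ℝ) (hτ : 1 ≤ τ)
    -- quasi-triangle inequality for the data fidelity
    (htri : ∀ y₀ y₁ y₂ : Y, 𝒟 y₀ y₁ ≤ τ * 𝒟 y₀ y₂ + τ * 𝒟 y₂ y₁)
    (R : X → ℝ) (hR0 : ∀ x, 0 ≤ R x)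
    (E : X → X → ℝ) (hE0 : ∀ x₁ x₂, 0 ≤ E x₁ x₂)
    (xp : X) (hxpD : xp ∈ D) (y : Y) (hy : y = F xp)
    (β ε : ℝ) (hβ : 0 < β) (hε : 0 < ε)
    (Φ : ℝ → ℝ)
    (hconc : ConcaveOn ℝ (Set.Ici (0:ℝ)) Φ)
    (hcont : ContinuousOn Φ (Set.Ici (0:ℝ)))
    (hmono : StrictMonoOn Φ (Set.Ici (0:ℝ)))
    (hΦ0 : Φ 0 = 0) (hΦnonneg : ∀ t : ℝ, 0 ≤ t → 0 ≤ Φ t)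
    -- the variational inequality
    (hvar : ∀ x ∈ D, |R x - R xp| < ε →
      β * E x xp ≤ R x - R xp + Φ (𝒟 (F x) (F xp)))
    -- linear bound on Φ
    (C : ℝ) (hC : 0 < C) (hΦlin : ∀ t : ℝ, 0 ≤ t → Φ t ≤ C * t)
    (δ α : ℝ) (hδ : 0 < δ) (hα : 0 < α)
    -- exact penalization condition: α need not tend to 0
    (hCτα : C * τ * α ≤ 1)
    (yδ : Y) (h1 : 𝒟 y yδ ≤ δ) (h2 : 𝒟 yδ y ≤ δ)
    -- x_{α,δ} minimizes the Tikhonov functional over D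
    (xad : X) (hxadD : xad ∈ D)
    (hmin : ∀ z ∈ D, 𝒟 (F xad) yδ + α * R xad ≤ 𝒟 (F z) yδ + α * R z)
    (hnear : |R xad - R xp| < ε) :
    Phiconj Φ (τ * α) = 0 ∧
    β * E xad xp ≤ δ / α + Φ (τ * δ) ∧
    δ / α + Φ (τ * δ) ≤ δ / α + C * τ * δ := by
  have hτ0 : (0:ℝ) < τ := lt_of_lt_of_le one_pos hτ
  have hCτ : (0:ℝ) ≤ C * τ := by positivity
  refine ⟨?_, ?_, ?_⟩
  · rw [Phiconj, ENNReal.iSup_eq_zero]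
    rintro ⟨u, hu⟩
    rw [ENNReal.ofReal_eq_zero]
    have h1 : Φ u ≤ C * u := hΦlin u hu
    nlinarith [mul_le_mul_of_nonneg_left h1 (le_of_lt (mul_pos hτ0 hα)),
      mul_le_mul_of_nonneg_right hCτα hu]
  · set d := 𝒟 (F xad) yδ with hdd
    set t := 𝒟 (F xad) (F xp) with htd
    have hFxp : 𝒟 (F xp) yδ ≤ δ := by rw [← hy]; exact h1
    have hyF : 𝒟 yδ (F xp) ≤ δ := by rw [← hy]; exact h2
    have hmin' := hmin xp hxpD
    have hd : d ≤ δ + α * (R xp - R xad) := by linarith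
    have hd0 : 0 ≤ d := h𝒟0 _ _
    have hsle : R xad - R xp ≤ δ / α := by
      rw [le_div_iff₀ hα]; nlinarith
    have ht : t ≤ τ * d + τ * δ := by
      have := htri (F xad) (F xp) yδ
      nlinarith [mul_le_mul_of_nonneg_left hyF (le_of_lt hτ0)]
    have hΦm : Φ t ≤ Φ (τ * d + τ * δ) := by
      rcases eq_or_lt_of_le ht with h | h
      · rw [h]
      · exact le_of_lt (hmono (Set.mem_Ici.2 (h𝒟0 _ _))
          (Set.mem_Ici.2 (by positivity)) h)
    have hsub : Φ (τ * d + τ * δ) ≤ Φ (τ * d) + Φ (τ * δ) :=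
      concave_subadd hconc hΦ0 (by positivity) (by positivity)
    have hlin : Φ (τ * d) ≤ C * (τ * d) := hΦlin _ (by positivity)
    have hv : β * E xad xp ≤ R xad - R xp + Φ t := hvar xad hxadD hnear
    have hCd : C * (τ * d) ≤ C * τ * δ + C * τ * α * (R xp - R xad) := by
      nlinarith [mul_le_mul_of_nonneg_left hd hCτ]
    have key : (R xad - R xp) * (1 - C * τ * α) ≤ (δ / α) * (1 - C * τ * α) :=
      mul_le_mul_of_nonneg_right hsle (by linarith)
    have key2 : (δ / α) * (1 - C * τ * α) = δ / α - C * τ * δ := by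
      field_simp
    nlinarith [key, key2]
  · have := hΦlin (τ * δ) (by positivity)
    linarith [this]
end

section
/- Let X be a real normed space, Λ a countable index set, q > 1 a real number, v : Λ → [0,∞), and for each λ ∈ Λ let φ_λ : X → ℝ and let D_λ : X → ℝ be a continuous linear functional (the Gâteaux derivative of φ_λ at x⁺). Let x, x⁺ ∈ X and C ≥ 0 satisfy, for every λ ∈ Λ, sgn(φ_λ(x⁺))·(φ_λ(x⁺) − φ_λ(x)) ≤ C·sgn(φ_λ(x⁺))·D_λ(x⁺ − x). Assume that the families (v_λ·|φ_λ(x⁺)|^q)_λ, (v_λ·|φ_λ(x)|^q)_λ and (v_λ·q·|φ_λ(x⁺)|^{q−1}·sgn(φ_λ(x⁺))·D_λ(x⁺ − x))_λ are summable. Then Σ_λ v_λ·|φ_λ(x⁺)|^q − Σ_λ v_λ·|φ_λ(x)|^q ≤ C · Σ_λ v_λ·q·|φ_λ(x⁺)|^{q−1}·sgn(φ_λ(x⁺))·D_λ(x⁺ − x). -/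
lemma core17 (q : ℝ) (hq : 1 < q) (a b : ℝ) (ha : 0 < a) :
    a ^ q - |b| ^ q ≤ q * a ^ (q - 1) * (a - b) := by
  have hb : (0:ℝ) ≤ |b| := abs_nonneg b
  have hs : (-1:ℝ) ≤ |b| / a - 1 := by
    have : 0 ≤ |b| / a := div_nonneg hb ha.le
    linarith
  have hbern := one_add_mul_self_le_rpow_one_add hs hq.le
  rw [add_sub_cancel] at hbern
  have hdiv : (|b| / a) ^ q = |b| ^ q / a ^ q := Real.div_rpow hb ha.le q
  have haq : (0:ℝ) < a ^ q := Real.rpow_pos_of_pos ha q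
  have haq1 : a ^ (q - 1) * a = a ^ q := by
    rw [← Real.rpow_add_one ha.ne' (q - 1), sub_add_cancel]
  have haq1pos : (0:ℝ) < a ^ (q - 1) := Real.rpow_pos_of_pos ha _
  have hmul := mul_le_mul_of_nonneg_right hbern haq.le
  rw [hdiv, div_mul_cancel₀ _ haq.ne'] at hmul
  have hble : b ≤ |b| := le_abs_self b
  have e1 : |b| / a * a ^ q = |b| * a ^ (q - 1) := by
    rw [← haq1]; field_simp
  have e2 := mul_le_mul_of_nonneg_left hble
    (mul_pos (lt_trans zero_lt_one hq) haq1pos).le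
  nlinarith [hmul, e1, haq1, e2]

lemma key17 (q : ℝ) (hq : 1 < q) (a b : ℝ) :
    |a| ^ q - |b| ^ q ≤ q * |a| ^ (q - 1) * Real.sign a * (a - b) := by
  rcases lt_trichotomy a 0 with h | h | h
  · have := core17 q hq (-a) (-b) (by linarith)
    rw [abs_neg] at this
    rw [Real.sign_of_neg h, abs_of_neg h]
    nlinarith [this]
  · subst h
    simp [Real.zero_rpow (by positivity : q ≠ 0)]
    positivity
  · have := core17 q hq a b h
    rw [Real.sign_of_pos h, abs_of_pos h]
    linarith


/-- Comparison of the non-convex `ℓ^q`-regularizer values at `x⁺` and `x` with the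
pairing of its formal derivative at `x⁺` against `x⁺ − x`, under the sign condition
(C4). -/
theorem statement17 {X : Type*} [NormedAddCommGroup X] [NormedSpace ℝ X]
    {Λ : Type*} [Countable Λ] (q : ℝ) (hq : 1 < q)
    (v : Λ → ℝ) (hv : ∀ l, 0 ≤ v l)
    (φ : Λ → X → ℝ)
    -- D l is the (continuous linear) Gâteaux derivative of φ_l at x⁺
    (D : Λ → X →L[ℝ] ℝ)
    (x xp : X) (C : ℝ) (hC : 0 ≤ C)
    -- sign condition (C4)
    (hsgn : ∀ l : Λ, Real.sign (φ l xp) * (φ l xp - φ l x) ≤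
      C * (Real.sign (φ l xp) * D l (xp - x)))
    -- summability assumptions
    (h1 : Summable fun l => v l * |φ l xp| ^ q)
    (h2 : Summable fun l => v l * |φ l x| ^ q)
    (h3 : Summable fun l =>
      v l * (q * |φ l xp| ^ (q - 1) * Real.sign (φ l xp) * D l (xp - x))) :
    (∑' l, v l * |φ l xp| ^ q) - (∑' l, v l * |φ l x| ^ q) ≤
      C * ∑' l, v l * (q * |φ l xp| ^ (q - 1) * Real.sign (φ l xp) * D l (xp - x)) := by
  have key : ∀ l, v l * |φ l xp| ^ q - v l * |φ l x| ^ q ≤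
      C * (v l * (q * |φ l xp| ^ (q - 1) * Real.sign (φ l xp) * D l (xp - x))) := by
    intro l
    have h0 := key17 q hq (φ l xp) (φ l x)
    have hp : (0:ℝ) ≤ q * |φ l xp| ^ (q - 1) := by positivity
    have h1' := mul_le_mul_of_nonneg_left (hsgn l) hp
    have h0'' : |φ l xp| ^ q - |φ l x| ^ q ≤
        q * |φ l xp| ^ (q - 1) * (C * (Real.sign (φ l xp) * D l (xp - x))) := by
      nlinarith [h0, h1']
    have h2'' := mul_le_mul_of_nonneg_left h0'' (hv l)
    nlinarith [h2'']
  rw [← Summable.tsum_sub h1 h2, ← tsum_mul_left]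
  exact Summable.tsum_le_tsum key (h1.sub h2) (h3.mul_left C)
end
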